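/- arXiv:0705.0211 — 6 statements merged into one kernel-verified Lean document; each statement's English description precedes it below -/
import Mathlib

section
/- Let H be a real separable Hilbert space, X a centered H-valued random element on a probability space (Ω,P) with E‖X‖⁴ < ∞, and let a₁,…,a_q ∈ H be linearly independent. Set A = (⟨X,a₁⟩,…,⟨X,a_q⟩) ∈ ℝ^q and suppose Y = f(A,ε) for a measurable function f and a random element ε (in some measurable space) independent of X. Assume condition (A1): for every u ∈ H there exists v ∈ ℝ^q such that E[⟨u,X⟩ | σ(A)] = vᵀA almost surely. Then the conditional expectation E[X | σ(Y)] takes its values almost surely in the linear span of Γ_X a₁, …, Γ_X a_q, where Γ_X is the covariance operator of X. -/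
/-!
For `u` orthogonal to every `Γ_X aⱼ`, set `g = ⟪u, X⟫`. By (A1), `E[g | σ(A)]` is a linear
combination `∑ vⱼ Aⱼ`, and `E[Aⱼ g] = ⟪u, Γ_X aⱼ⟫ = 0`, so
`E[(E[g | σ(A)])²] = E[E[g | σ(A)] g] = 0` and `E[g | σ(A)] = 0`. Since `ε` is independent of
`X`, integrating out `ε` (Fubini) shows that `E[g | σ(A, ε)] = 0` as well, and `σ(Y) ⊆ σ(A, ε)`
gives `⟪u, E[X | σ(Y)]⟫ = E[g | σ(Y)] = 0`. Testing against a countable dense subset of the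
orthogonal complement of the span then puts `E[X | σ(Y)]` in the span almost surely.
-/

open MeasureTheory ProbabilityTheory
open scoped RealInnerProductSpace

section

variable {Ω : Type*} {m mΩ : MeasurableSpace Ω} {P : Measure Ω}

lemma setIntegral_eq_zero_of_condExp_ae_eq_zero [IsFiniteMeasure P] (hm : m ≤ mΩ) {g : Ω → ℝ}
    (hg : Integrable g P) (h0 : P[g|m] =ᵐ[P] 0) {s : Set Ω} (hs : MeasurableSet[m] s) :
    ∫ ω in s, g ω ∂P = 0 := by
  rw [← setIntegral_condExp hm hg hs, setIntegral_congr_ae (hm s hs) (h0.mono fun ω h _ => h)]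
  simp

lemma IndepFun.integral_comp_eq_integral_integral [IsFiniteMeasure P] {E F G : Type*}
    [MeasurableSpace E] [MeasurableSpace F] [NormedAddCommGroup G] [NormedSpace ℝ G]
    {ε : Ω → E} {X : Ω → F} (hε : Measurable ε) (hX : Measurable X) (hind : IndepFun ε X P)
    {k : E × F → G} (hk : StronglyMeasurable k) (hint : Integrable (fun ω => k (ε ω, X ω)) P) :
    ∫ ω, k (ε ω, X ω) ∂P = ∫ e, ∫ ω, k (e, X ω) ∂P ∂(P.map ε) := by
  have hmap : P.map (fun ω => (ε ω, X ω)) = (P.map ε).prod (P.map X) :=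
    (indepFun_iff_map_prod_eq_prod_map_map hε.aemeasurable hX.aemeasurable).mp hind
  have hεX : AEMeasurable (fun ω => (ε ω, X ω)) P := (hε.prodMk hX).aemeasurable
  have hkint : Integrable k ((P.map ε).prod (P.map X)) := by
    rw [← hmap]
    exact (integrable_map_measure hk.aestronglyMeasurable hεX).mpr hint
  rw [← integral_map hεX hk.aestronglyMeasurable, hmap, integral_prod k hkint]
  congr with e
  exact integral_map hX.aemeasurable
    (hk.comp_measurable measurable_prodMk_left).aestronglyMeasurable

lemma condExp_comap_prod_ae_eq_zero_of_indepFun [IsFiniteMeasure P] {E F G : Type*}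
    [MeasurableSpace E] [MeasurableSpace F] [MeasurableSpace G]
    {ε : Ω → E} {X : Ω → F} (hε : Measurable ε) (hX : Measurable X) (hind : IndepFun ε X P)
    {φ : F → G} (hφ : Measurable φ) {ψ : F → ℝ} (hψ : Measurable ψ)
    (hint : Integrable (fun ω => ψ (X ω)) P)
    (h0 : P[fun ω => ψ (X ω) | MeasurableSpace.comap (fun ω => φ (X ω)) inferInstance] =ᵐ[P] 0) :
    P[fun ω => ψ (X ω) | MeasurableSpace.comap (fun ω => (φ (X ω), ε ω)) inferInstance]
      =ᵐ[P] 0 := by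
  have hφX : Measurable fun ω => φ (X ω) := hφ.comp hX
  refine (ae_eq_condExp_of_forall_setIntegral_eq ((hφX.prodMk hε).comap_le) hint
    (fun _ _ _ => integrableOn_zero) (fun s hs _ => ?_) aestronglyMeasurable_zero).symm
  obtain ⟨B, hB, rfl⟩ := hs
  let k : E × F → ℝ := {p | (φ p.2, p.1) ∈ B}.indicator fun p => ψ p.2
  have hk : Measurable k :=
    (hψ.comp measurable_snd).indicator
      (hB.preimage ((hφ.comp measurable_snd).prodMk measurable_fst))
  have hsection : ∀ e, ∫ ω, k (e, X ω) ∂P = 0 := fun e => by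
    have hBe : MeasurableSet {g | (g, e) ∈ B} := measurable_prodMk_right hB
    rw [← setIntegral_eq_zero_of_condExp_ae_eq_zero hφX.comap_le hint h0 ⟨_, hBe, rfl⟩,
      ← integral_indicator (hφX hBe)]
    rfl
  have hkεX : (fun ω => k (ε ω, X ω))
      = ((fun ω => (φ (X ω), ε ω)) ⁻¹' B).indicator fun ω => ψ (X ω) := rfl
  have hSB : MeasurableSet ((fun ω => (φ (X ω), ε ω)) ⁻¹' B) := (hφX.prodMk hε) hB
  calc ∫ ω in (fun ω => (φ (X ω), ε ω)) ⁻¹' B, (0 : Ω → ℝ) ω ∂P = 0 := by simp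
    _ = ∫ ω, k (ε ω, X ω) ∂P := by
        rw [IndepFun.integral_comp_eq_integral_integral hε hX hind hk.stronglyMeasurable
          (hkεX ▸ hint.indicator hSB)]
        simp [hsection]
    _ = _ := by rw [hkεX, integral_indicator hSB]

lemma condExp_ae_eq_zero_of_integral_condExp_mul_eq_zero [IsFiniteMeasure P] (hm : m ≤ mΩ)
    {g : Ω → ℝ} (hg : MemLp g 2 P) (h : ∫ ω, (P[g|m]) ω * g ω ∂P = 0) : P[g|m] =ᵐ[P] 0 := by
  set c := P[g|m]
  have hc : MemLp c 2 P := hg.condExp one_le_two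
  have hsq : ∫ ω, c ω * c ω ∂P = 0 := calc
    ∫ ω, c ω * c ω ∂P = ∫ ω, (P[c * g|m]) ω ∂P := integral_congr_ae
        (condExp_mul_of_stronglyMeasurable_left stronglyMeasurable_condExp
          (hc.integrable_mul hg) (hg.integrable one_le_two)).symm
    _ = ∫ ω, c ω * g ω ∂P := integral_condExp hm
    _ = 0 := h
  filter_upwards [(integral_eq_zero_iff_of_nonneg (fun ω => mul_self_nonneg (c ω))
    (hc.integrable_mul hc)).mp hsq] with ω hω using mul_self_eq_zero.mp hω

variable {H : Type*} [NormedAddCommGroup H] [InnerProductSpace ℝ H]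

lemma integral_inner_mul_inner_eq_inner_integral_smul [CompleteSpace H] [IsFiniteMeasure P]
    {X : Ω → H} (hX : MemLp X 2 P) (a u : H) :
    ∫ ω, ⟪a, X ω⟫ * ⟪u, X ω⟫ ∂P = ⟪u, ∫ ω, ⟪a, X ω⟫ • X ω ∂P⟫ := by
  have hint : Integrable (fun ω => ⟪a, X ω⟫ • X ω) P :=
    memLp_one_iff_integrable.mp (hX.smul (hX.const_inner a))
  rw [← integral_inner hint]
  simp only [real_inner_smul_right]

lemma condExp_inner_ae_eq_zero_of_ae_eq_sum [CompleteSpace H] [IsFiniteMeasure P] {ι : Type*}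
    [Fintype ι] (hm : m ≤ mΩ) {X : Ω → H} (hX : MemLp X 2 P) {u : H} {a : ι → H} {v : ι → ℝ}
    (hv : P[fun ω => ⟪u, X ω⟫|m] =ᵐ[P] fun ω => ∑ j, v j * ⟪X ω, a j⟫)
    (horth : ∀ j, ⟪u, ∫ ω, ⟪a j, X ω⟫ • X ω ∂P⟫ = 0) :
    P[fun ω => ⟪u, X ω⟫|m] =ᵐ[P] 0 := by
  refine condExp_ae_eq_zero_of_integral_condExp_mul_eq_zero hm (hX.const_inner u) ?_
  calc _ = ∫ ω, ∑ j, v j * (⟪a j, X ω⟫ * ⟪u, X ω⟫) ∂P := integral_congr_ae (hv.mono fun ω h => by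
          simp [h, Finset.sum_mul, real_inner_comm, mul_assoc])
    _ = ∑ j, v j * ⟪u, ∫ ω, ⟪a j, X ω⟫ • X ω ∂P⟫ := by
        rw [integral_finsetSum _ fun j _ => by
          exact ((hX.const_inner (a j)).integrable_mul (hX.const_inner u)).const_mul (v j)]
        simp [integral_const_mul, integral_inner_mul_inner_eq_inner_integral_smul hX]
    _ = 0 := by simp [horth]

lemma ae_mem_of_forall_mem_orthogonal_inner_eq_zero [SecondCountableTopology H] (S : Submodule ℝ H)
    [S.HasOrthogonalProjection] {F : Ω → H} (h : ∀ u ∈ Sᗮ, ∀ᵐ ω ∂P, ⟪u, F ω⟫ = 0) :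
    ∀ᵐ ω ∂P, F ω ∈ S := by
  let d := TopologicalSpace.denseSeq Sᗮ
  filter_upwards [ae_all_iff.mpr fun n => h (d n) (d n).2] with ω hω
  rw [← Submodule.orthogonal_orthogonal S, Submodule.mem_orthogonal']
  intro u hu
  rw [real_inner_comm]
  exact (TopologicalSpace.denseRange_denseSeq Sᗮ).induction_on
    (p := fun w : Sᗮ => ⟪(w : H), F ω⟫ = 0) ⟨u, hu⟩ (isClosed_eq (by fun_prop) continuous_const) hω

end

theorem functional_SIR_inverse_regression_general
    {Ω : Type*} [MeasurableSpace Ω] (P : Measure Ω) [IsProbabilityMeasure P]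
    {H : Type*} [NormedAddCommGroup H] [InnerProductSpace ℝ H] [CompleteSpace H]
    [SecondCountableTopology H] [MeasurableSpace H] [BorelSpace H]
    {E : Type*} [MeasurableSpace E]
    (X : Ω → H) (hXmeas : Measurable X)
    (hX4 : Integrable (fun ω => ‖X ω‖ ^ 4) P)
    {q : ℕ} (a : Fin q → H)
    (A : Ω → Fin q → ℝ) (hA : ∀ ω, A ω = fun j => ⟪X ω, a j⟫)
    (ε : Ω → E) (hεmeas : Measurable ε) (hindep : IndepFun ε X P)
    (f : (Fin q → ℝ) × E → ℝ) (hf : Measurable f)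
    (Y : Ω → ℝ) (hY : ∀ ω, Y ω = f (A ω, ε ω))
    -- (A1): for every `u ∈ H` there is `v ∈ ℝ^q` with `E[⟪u,X⟫ | σ(A)] = vᵀ A` a.s.
    (hA1 : ∀ u : H, ∃ v : Fin q → ℝ,
      P[(fun ω => ⟪u, X ω⟫) | MeasurableSpace.comap A inferInstance]
        =ᵐ[P] fun ω => ∑ j, v j * A ω j)
    -- the covariance operator of `X`
    (ΓX : H → H) (hΓX : ∀ u, ΓX u = ∫ ω, ⟪u, X ω⟫ • X ω ∂P) :
    ∀ᵐ ω ∂P,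
      (P[X | MeasurableSpace.comap Y inferInstance]) ω
        ∈ Submodule.span ℝ (Set.range fun j => ΓX (a j)) := by
  obtain rfl : A = fun ω j => ⟪X ω, a j⟫ := funext hA
  obtain rfl : Y = fun ω => f ((fun j => ⟪X ω, a j⟫), ε ω) := funext hY
  have hX2 : MemLp X 2 P := (memLp_two_iff_integrable_sq_norm hXmeas.aestronglyMeasurable).mpr
    (integrable_norm_pow_of_le hXmeas.aestronglyMeasurable (by norm_num) hX4)
  have hφ : Measurable fun x : H => fun j => ⟪x, a j⟫ := by fun_prop
  have hAmeas : Measurable fun ω j => ⟪X ω, a j⟫ := hφ.comp hXmeas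
  have hAε : Measurable fun ω => ((fun j => ⟪X ω, a j⟫), ε ω) := hAmeas.prodMk hεmeas
  have : FiniteDimensional ℝ (Submodule.span ℝ (Set.range fun j => ΓX (a j))) :=
    FiniteDimensional.span_of_finite ℝ (Set.finite_range _)
  refine ae_mem_of_forall_mem_orthogonal_inner_eq_zero _ fun u hu => ?_
  have hcov : ∀ j, ⟪u, ∫ ω, ⟪a j, X ω⟫ • X ω ∂P⟫ = 0 := fun j =>
    hΓX (a j) ▸ (Submodule.mem_orthogonal' _ u).mp hu _ (Submodule.subset_span ⟨j, rfl⟩)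
  obtain ⟨v, hv⟩ := hA1 u
  have hcondA := condExp_inner_ae_eq_zero_of_ae_eq_sum hAmeas.comap_le hX2 hv hcov
  have hcondAε := condExp_comap_prod_ae_eq_zero_of_indepFun hεmeas hXmeas hindep hφ
    (measurable_const.inner measurable_id) ((hX2.const_inner u).integrable one_le_two) hcondA
  have hY_le : MeasurableSpace.comap (fun ω => f ((fun j => ⟪X ω, a j⟫), ε ω)) inferInstance
      ≤ MeasurableSpace.comap (fun ω => ((fun j => ⟪X ω, a j⟫), ε ω)) inferInstance :=
    (hf.comp (comap_measurable _)).comap_le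
  calc (fun ω => ⟪u, (P[X | _]) ω⟫) =ᵐ[P] P[fun ω => ⟪u, X ω⟫ | _] :=
        (innerSL ℝ u).comp_condExp_comm (hX2.integrable one_le_two)
    _ =ᵐ[P] P[P[fun ω => ⟪u, X ω⟫ | _] | _] := (condExp_condExp_of_le hY_le hAε.comap_le).symm
    _ =ᵐ[P] P[0 | _] := condExp_congr_ae hcondAε
    _ = 0 := condExp_zero

/-- Let `H` be a real separable Hilbert space, `X` a centered `H`-valued
random element with `E‖X‖⁴ < ∞`, `a₁, …, a_q` linearly independent, `A = (⟪X,aⱼ⟫)ⱼ`,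
`Y = f(A, ε)` with `ε` independent of `X`.  Under the linearity condition (A1),
`E[X | σ(Y)]` takes its values a.s. in the span of `Γ_X a₁, …, Γ_X a_q`, where `Γ_X` is
the covariance operator of `X`. -/
theorem functional_SIR_inverse_regression
    {Ω : Type*} [MeasurableSpace Ω] (P : Measure Ω) [IsProbabilityMeasure P]
    {H : Type*} [NormedAddCommGroup H] [InnerProductSpace ℝ H] [CompleteSpace H]
    [SecondCountableTopology H] [MeasurableSpace H] [BorelSpace H]
    {E : Type*} [MeasurableSpace E]
    (X : Ω → H) (hXmeas : Measurable X)
    (hXcentered : ∫ ω, X ω ∂P = 0)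
    (hX4 : Integrable (fun ω => ‖X ω‖ ^ 4) P)
    {q : ℕ} (a : Fin q → H) (ha : LinearIndependent ℝ a)
    (A : Ω → Fin q → ℝ) (hA : ∀ ω, A ω = fun j => ⟪X ω, a j⟫)
    (ε : Ω → E) (hεmeas : Measurable ε) (hindep : IndepFun ε X P)
    (f : (Fin q → ℝ) × E → ℝ) (hf : Measurable f)
    (Y : Ω → ℝ) (hY : ∀ ω, Y ω = f (A ω, ε ω))
    -- (A1): for every `u ∈ H` there is `v ∈ ℝ^q` with `E[⟪u,X⟫ | σ(A)] = vᵀ A` a.s.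
    (hA1 : ∀ u : H, ∃ v : Fin q → ℝ,
      P[(fun ω => ⟪u, X ω⟫) | MeasurableSpace.comap A inferInstance]
        =ᵐ[P] fun ω => ∑ j, v j * A ω j)
    -- the covariance operator of `X`
    (ΓX : H → H) (hΓX : ∀ u, ΓX u = ∫ ω, ⟪u, X ω⟫ • X ω ∂P) :
    ∀ᵐ ω ∂P,
      (P[X | MeasurableSpace.comap Y inferInstance]) ω
        ∈ Submodule.span ℝ (Set.range fun j => ΓX (a j)) :=
  functional_SIR_inverse_regression_general P X hXmeas hX4 a A hA ε hεmeas hindep f hf Y hY hA1 ΓX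
    hΓX
end

section
/- Consistency of the SIR neural network weights: in the perceptron setting, assume (A7) ζ(z,·) is continuous on W for every z ∈ O; (A8) there is a measurable ζ̃ : O → ℝ with |ζ(z,w)| ≤ ζ̃(z) for all z ∈ O, w ∈ W, and E[ζ̃(Z)] < ∞; (A9) for every w ∈ W there is C(w) > 0 with |ζ((x,y),w) − ζ((x',y),w)| ≤ C(w)‖x − x'‖ for all (x,y),(x',y) ∈ O, and sup_{w∈W} C(w) < ∞; (A10) ζ(·,w) is measurable for every w ∈ W. Assume moreover that the random estimates a_j^N ∈ H satisfy, for each j = 1,…,q, ⟨Γ_X(a_j^N − a_j), a_j^N − a_j⟩ →_p 0 and ⟨Γ̂_N(a_j^N − a_j), a_j^N − a_j⟩ →_p 0, where Γ̂_N u = (1/N)Σ_{n≤N}⟨u,Xⁿ⟩Xⁿ. Let W* be the set of minimizers over W of w ↦ E[ζ(Z,w)], and let w*_N be measurable random elements of W minimizing w ↦ Σ_{n≤N} ζ(Z̃_N^n, w) over W. Then d(w*_N, W*) →_p 0 as N → ∞, where d(w,𝒲) = inf_{w̃∈𝒲}‖w − w̃‖. -/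
/-!
The empirical risk built from the true projections `⟪Xⁿ, a_j⟫` converges to the risk
`R w = E ζ(Z, w)` uniformly on the compact set `W`, in probability: cover `W` by finitely many
small balls and apply the strong law of large numbers to the upper envelope of `ζ` on each ball,
whose mean is close to `R` at the centre by dominated convergence. Replacing `a_j` by `a_j^N` moves
the empirical risk by at most `sup C · (1/N) Σₙ ‖Z̃_Nⁿ − Zₙ‖`, and by Cauchy–Schwarz this is at most
`sup C · (Σ_j ⟪Γ̂_N (a_j^N − a_j), a_j^N − a_j⟫)^{1/2}`, which tends to `0` in probability.
Finally `R` is continuous on `W`, so it exceeds its minimum by some `α > 0` at distance `≥ ε` from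
`W*`; a minimizer of a criterion uniformly within `α / 2` of `R` therefore lies within `ε` of `W*`.
-/

open MeasureTheory ProbabilityTheory
open scoped RealInnerProductSpace

/-- The weight space of a one-hidden-layer perceptron with `q` inputs and `q₂` hidden
neurons: `w = ((wᵢ⁽²⁾)ᵢ, (wᵢⱼ⁽¹⁾)ᵢⱼ, (wᵢ⁽⁰⁾)ᵢ) ∈ ℝ^{(q+2)q₂}`. -/
abbrev PerceptronWeights (q q₂ : ℕ) : Type :=
  (Fin q₂ → ℝ) × (Fin q₂ → Fin q → ℝ) × (Fin q₂ → ℝ)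

open Filter Metric Set
open scoped Topology

section UpperEnvelope

variable {β Γ : Type*}

-- In `ℝ`, `⨆` of an empty or unbounded family is `0`: hence the hypotheses of the lemmas below.
noncomputable def upperEnvelope (f : β → Γ → ℝ) (S : Set Γ) (b : β) : ℝ :=
  ⨆ w : S, f b w

variable {f : β → Γ → ℝ} {S : Set Γ} {h : β → ℝ}

lemma le_upperEnvelope (hbd : ∀ b, ∀ w ∈ S, |f b w| ≤ h b) {b : β} {w : Γ} (hw : w ∈ S) :
    f b w ≤ upperEnvelope f S b :=
  le_ciSup (f := fun w : S => f b w)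
    ⟨h b, by rintro _ ⟨v, rfl⟩; exact (abs_le.1 (hbd b v v.2)).2⟩ ⟨w, hw⟩

lemma upperEnvelope_le (hS : S.Nonempty) {b : β} {c : ℝ} (hc : ∀ w ∈ S, f b w ≤ c) :
    upperEnvelope f S b ≤ c :=
  haveI := hS.to_subtype
  ciSup_le fun w => hc w w.2

lemma abs_upperEnvelope_le (hS : S.Nonempty) (hbd : ∀ b, ∀ w ∈ S, |f b w| ≤ h b) (b : β) :
    |upperEnvelope f S b| ≤ h b := by
  obtain ⟨w, hw⟩ := hS
  refine abs_le.2 ⟨?_, upperEnvelope_le ⟨w, hw⟩ fun v hv => (abs_le.1 (hbd b v hv)).2⟩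
  exact (abs_le.1 (hbd b w hw)).1.trans (le_upperEnvelope hbd hw)

lemma measurable_upperEnvelope [MeasurableSpace β] [TopologicalSpace Γ] [SecondCountableTopology Γ]
    (hmeas : ∀ w ∈ S, Measurable fun b => f b w) (hcont : ∀ b, ContinuousOn (f b) S) :
    Measurable (upperEnvelope f S) := by
  obtain ⟨t, htc, htd⟩ := TopologicalSpace.exists_countable_dense S
  have : Countable t := htc.to_subtype
  have hsup : upperEnvelope f S = fun b => ⨆ w : t, f b w := funext fun b =>
    (htd.ciSup' (hcont b).domRestrict).symm
  rw [hsup]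
  exact Measurable.iSup fun w => hmeas w w.1.2

lemma tendsto_upperEnvelope_inter_ball [PseudoMetricSpace Γ] {K : Set Γ} {w₀ : Γ} (hw₀ : w₀ ∈ K)
    (hbd : ∀ b, ∀ w ∈ K, |f b w| ≤ h b) {b : β} (hcont : ContinuousWithinAt (f b) K w₀) :
    Tendsto (fun δ => upperEnvelope f (K ∩ ball w₀ δ) b) (𝓝[>] 0) (𝓝 (f b w₀)) := by
  rw [Metric.tendsto_nhds]
  intro γ hγ
  obtain ⟨ρ, hρ, hball⟩ := Metric.continuousWithinAt_iff.1 hcont (γ / 2) (half_pos hγ)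
  filter_upwards [Ioo_mem_nhdsGT hρ] with δ ⟨hδ, hδρ⟩
  have hw₀δ : w₀ ∈ K ∩ ball w₀ δ := ⟨hw₀, mem_ball_self hδ⟩
  have hlow : f b w₀ ≤ upperEnvelope f (K ∩ ball w₀ δ) b :=
    le_upperEnvelope (fun b w hw => hbd b w hw.1) hw₀δ
  have hup : upperEnvelope f (K ∩ ball w₀ δ) b ≤ f b w₀ + γ / 2 :=
    upperEnvelope_le ⟨w₀, hw₀δ⟩ fun w hw => by
      have := hball hw.1 ((mem_ball.1 hw.2).trans hδρ)
      linarith [(abs_lt.1 (Real.dist_eq _ _ ▸ this)).2]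
  rw [Real.dist_eq, abs_lt]
  constructor <;> linarith

end UpperEnvelope

section InProbability

variable {Ω ι : Type*} [MeasurableSpace Ω] {P : Measure Ω} {l : Filter ι}

lemma tendsto_measure_of_subset_union {s t u : ι → Set Ω} (hsub : ∀ i, s i ⊆ t i ∪ u i)
    (ht : Tendsto (fun i => P (t i)) l (𝓝 0)) (hu : Tendsto (fun i => P (u i)) l (𝓝 0)) :
    Tendsto (fun i => P (s i)) l (𝓝 0) :=
  tendsto_of_tendsto_of_tendsto_of_le_of_le tendsto_const_nhds (by simpa using ht.add hu)
    (fun _ => zero_le) fun i => (measure_mono (hsub i)).trans (measure_union_le _ _)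

lemma tendsto_measure_le_mul_sqrt_sum {κ : Type*} [Fintype κ] {Q : κ → ι → Ω → ℝ}
    (hQ : ∀ j, ∀ η > 0, Tendsto (fun i => P {ω | η < Q j i ω}) l (𝓝 0)) {M : ℝ} (hM : 0 < M)
    {η : ℝ} (hη : 0 < η) :
    Tendsto (fun i => P {ω | η ≤ M * √(∑ j, Q j i ω)}) l (𝓝 0) := by
  set c : ℝ := (η / M) ^ 2 / (Fintype.card κ + 1)
  have hc : 0 < c := by positivity
  have hsub : ∀ i, {ω | η ≤ M * √(∑ j, Q j i ω)} ⊆ ⋃ j, {ω | c < Q j i ω} := by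
    intro i ω hω
    by_contra hnot
    simp only [mem_iUnion, mem_ofPred_eq, not_exists, not_lt] at hnot hω
    have hlow : (η / M) ^ 2 ≤ ∑ j, Q j i ω :=
      (Real.le_sqrt' (by positivity)).1 ((div_le_iff₀' hM).2 hω)
    have hup : ∑ j, Q j i ω < (η / M) ^ 2 := calc
      ∑ j, Q j i ω ≤ Fintype.card κ * c := by
        simpa using Finset.sum_le_sum fun j (_ : j ∈ Finset.univ) => hnot j
      _ < (η / M) ^ 2 := by
        rw [mul_div_assoc', div_lt_iff₀ (by positivity)]
        nlinarith [show 0 < (η / M) ^ 2 by positivity]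
    linarith
  refine tendsto_of_tendsto_of_tendsto_of_le_of_le tendsto_const_nhds
    (by simpa using tendsto_finsetSum Finset.univ fun j _ => hQ j c hc)
    (fun _ => zero_le) fun i => (measure_mono (hsub i)).trans (measure_iUnion_fintype_le _ _)

end InProbability

section UniformInProbability

variable {Ω ι Γ : Type*} [MeasurableSpace Ω]

def TendstoUniformlyOnInMeasure (P : Measure Ω) (F : ι → Ω → Γ → ℝ) (G : Γ → ℝ) (K : Set Γ)
    (l : Filter ι) : Prop :=
  ∀ η > 0, Tendsto (fun i => P {ω | ∃ w ∈ K, η ≤ |F i ω w - G w|}) l (𝓝 0)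

variable {P : Measure Ω} {l : Filter ι} {K : Set Γ}

lemma TendstoUniformlyOnInMeasure.of_abs_sub_le {F F' : ι → Ω → Γ → ℝ} {G : Γ → ℝ}
    (hF : TendstoUniformlyOnInMeasure P F G K l) {D : ι → Ω → ℝ}
    (hD : ∀ η > 0, Tendsto (fun i => P {ω | η ≤ D i ω}) l (𝓝 0))
    (hle : ∀ i ω, ∀ w ∈ K, |F' i ω w - F i ω w| ≤ D i ω) :
    TendstoUniformlyOnInMeasure P F' G K l := by
  intro η hη
  refine tendsto_measure_of_subset_union (fun i => ?_) (hF (η / 2) (half_pos hη))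
    (hD (η / 2) (half_pos hη))
  rintro ω ⟨w, hw, hηw⟩
  by_contra hnot
  simp only [mem_union, mem_ofPred_eq, not_or, not_exists, not_and, not_le] at hnot
  have := abs_sub_le (F' i ω w) (F i ω w) (G w)
  linarith [hnot.1 w hw, hle i ω w hw, hnot.2]

variable [PseudoMetricSpace Γ] {R : Γ → ℝ}

lemma exists_pos_gap_of_le_infDist (hK : IsCompact K) (hR : ContinuousOn R K) {w₀ : Γ}
    (hw₀ : ∀ v ∈ K, R w₀ ≤ R v) {ε : ℝ} (hε : 0 < ε) :
    ∃ α > 0, ∀ w ∈ K, ε ≤ infDist w {v ∈ K | ∀ v' ∈ K, R v ≤ R v'} → R w₀ + α ≤ R w := by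
  set Kfar := K ∩ {w | ε ≤ infDist w {v ∈ K | ∀ v' ∈ K, R v ≤ R v'}}
  have hKfar : IsCompact Kfar :=
    hK.inter_right (isClosed_le continuous_const (continuous_infDist_pt _))
  have hgap : ∀ w ∈ Kfar, R w₀ < R w := by
    intro w ⟨hwK, hwfar⟩
    by_contra! hle
    have hmin : w ∈ {v ∈ K | ∀ v' ∈ K, R v ≤ R v'} := ⟨hwK, fun v hv => hle.trans (hw₀ v hv)⟩
    rw [mem_ofPred_eq, infDist_zero_of_mem hmin] at hwfar
    linarith
  obtain ⟨a, ha, haR⟩ := hKfar.exists_forall_le' (hR.mono inter_subset_left) hgap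
  exact ⟨a - R w₀, sub_pos.2 ha, fun w hw hfar => by linarith [haR w ⟨hw, hfar⟩]⟩

theorem tendsto_measure_lt_infDist_argmin (hK : IsCompact K) (hKne : K.Nonempty)
    (hR : ContinuousOn R K) {F : ι → Ω → Γ → ℝ} (hF : TendstoUniformlyOnInMeasure P F R K l)
    {w : ι → Ω → Γ} (hw : ∀ i ω, w i ω ∈ K ∧ ∀ v ∈ K, F i ω (w i ω) ≤ F i ω v)
    {ε : ℝ} (hε : 0 < ε) :
    Tendsto (fun i => P {ω | ε < infDist (w i ω) {v ∈ K | ∀ v' ∈ K, R v ≤ R v'}}) l (𝓝 0) := by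
  obtain ⟨w₀, hw₀K, hw₀⟩ := hK.exists_isMinOn hKne hR
  obtain ⟨α, hα, hgap⟩ := exists_pos_gap_of_le_infDist hK hR (fun v hv => hw₀ hv) hε
  refine tendsto_of_tendsto_of_tendsto_of_le_of_le tendsto_const_nhds (hF (α / 2) (half_pos hα))
    (fun _ => zero_le) fun i => measure_mono fun ω hfar => ?_
  by_contra hnot
  simp only [mem_ofPred_eq, not_exists, not_and, not_le] at hnot hfar
  have hRfar := hgap _ (hw i ω).1 hfar.le
  have hmin := (hw i ω).2 w₀ hw₀K
  linarith [(abs_lt.1 (hnot _ (hw i ω).1)).1, (abs_lt.1 (hnot w₀ hw₀K)).2]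

end UniformInProbability

lemma exists_measurable_retraction {α : Type*} [MeasurableSpace α] {O : Set α}
    (hO : MeasurableSet O) (hne : O.Nonempty) :
    ∃ r : α → O, Measurable r ∧ ∀ x (hx : x ∈ O), r x = ⟨x, hx⟩ := by
  classical
  obtain ⟨z, hz⟩ := hne
  exact ⟨fun x => if hx : x ∈ O then ⟨x, hx⟩ else ⟨z, hz⟩,
    Measurable.dite measurable_id measurable_const hO, fun x hx => dif_pos hx⟩

section UniformLawOfLargeNumbers

variable {Ω β Γ : Type*} [MeasurableSpace Ω] {P : Measure Ω} [MeasurableSpace β]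
  {V₀ : Ω → β} {V : ℕ → Ω → β}

lemma tendsto_measure_integral_add_le_average [IsProbabilityMeasure P] {g : β → ℝ}
    (hg : Measurable g) (hint : Integrable (fun ω => g (V₀ ω)) P)
    (hindep : Pairwise fun i j => IndepFun (V i) (V j) P)
    (hid : ∀ n, IdentDistrib (V n) V₀ P P) {η : ℝ} (hη : 0 < η) :
    Tendsto (fun N : ℕ => P {ω | ∫ ω', g (V₀ ω') ∂P + η ≤
      (N : ℝ)⁻¹ * ∑ n ∈ Finset.range N, g (V n ω)}) atTop (𝓝 0) := by
  have hid₀ : ∀ n, IdentDistrib (fun ω => g (V n ω)) (fun ω => g (V 0 ω)) P P :=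
    fun n => ((hid n).comp hg).trans ((hid 0).comp hg).symm
  have hslln := strong_law_ae (fun n ω => g (V n ω)) (((hid 0).comp hg).integrable_iff.2 hint)
    (fun i j hij => (hindep hij).comp hg hg) hid₀
  have hmean : ∫ ω, g (V 0 ω) ∂P = ∫ ω, g (V₀ ω) ∂P := ((hid 0).comp hg).integral_eq
  rw [hmean] at hslln
  have hWLLN : TendstoInMeasure P (fun (N : ℕ) ω => (N : ℝ)⁻¹ * ∑ n ∈ Finset.range N, g (V n ω))
      atTop (fun _ => ∫ ω, g (V₀ ω) ∂P) :=
    tendstoInMeasure_of_tendsto_ae (fun N => (aemeasurable_const.mul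
      (Finset.aemeasurable_fun_sum _ fun n _ => hg.comp_aemeasurable (hid n).aemeasurable_fst)
      ).aestronglyMeasurable) (by simpa only [smul_eq_mul] using hslln)
  refine tendsto_of_tendsto_of_tendsto_of_le_of_le tendsto_const_nhds
    (hWLLN (ENNReal.ofReal η) (ENNReal.ofReal_pos.2 hη)) (fun _ => zero_le)
    fun N => measure_mono fun ω hω => ?_
  rw [mem_ofPred_eq] at hω ⊢
  rw [edist_dist, Real.dist_eq]
  exact ENNReal.ofReal_le_ofReal ((by linarith : η ≤ _).trans (le_abs_self _))

variable [PseudoMetricSpace Γ] {K : Set Γ} {f : β → Γ → ℝ} {h : β → ℝ}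

lemma continuousOn_integral_of_abs_le (hV₀ : AEMeasurable V₀ P)
    (hfmeas : ∀ w ∈ K, Measurable fun b => f b w) (hfcont : ∀ b, ContinuousOn (f b) K)
    (hbd : ∀ b, ∀ w ∈ K, |f b w| ≤ h b) (hint : Integrable (fun ω => h (V₀ ω)) P) :
    ContinuousOn (fun w => ∫ ω, f (V₀ ω) w ∂P) K :=
  continuousOn_of_dominated (fun w hw => ((hfmeas w hw).comp_aemeasurable hV₀).aestronglyMeasurable)
    (fun w hw => Eventually.of_forall fun ω => hbd (V₀ ω) w hw) hint
    (Eventually.of_forall fun ω => hfcont (V₀ ω))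

lemma tendsto_integral_upperEnvelope_inter_ball [SecondCountableTopology Γ]
    (hV₀ : AEMeasurable V₀ P) (hfmeas : ∀ w ∈ K, Measurable fun b => f b w)
    (hfcont : ∀ b, ContinuousOn (f b) K) (hbd : ∀ b, ∀ w ∈ K, |f b w| ≤ h b)
    (hint : Integrable (fun ω => h (V₀ ω)) P) {w₀ : Γ} (hw₀ : w₀ ∈ K) :
    Tendsto (fun δ => ∫ ω, upperEnvelope f (K ∩ ball w₀ δ) (V₀ ω) ∂P) (𝓝[>] 0)
      (𝓝 (∫ ω, f (V₀ ω) w₀ ∂P)) := by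
  refine tendsto_integral_filter_of_dominated_convergence (fun ω => h (V₀ ω)) ?_ ?_ hint
    (Eventually.of_forall fun ω =>
      tendsto_upperEnvelope_inter_ball hw₀ hbd (hfcont (V₀ ω) w₀ hw₀))
  · exact Eventually.of_forall fun δ => ((measurable_upperEnvelope
      (fun w hw => hfmeas w hw.1) fun b => (hfcont b).mono inter_subset_left).comp_aemeasurable
      hV₀).aestronglyMeasurable
  · filter_upwards [self_mem_nhdsWithin] with δ (hδ : 0 < δ)
    exact Eventually.of_forall fun ω =>
      abs_upperEnvelope_le (S := K ∩ ball w₀ δ) ⟨w₀, hw₀, mem_ball_self hδ⟩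
      (fun b w hw => hbd b w hw.1) (V₀ ω)

lemma exists_pos_radius_integral_upperEnvelope_le [SecondCountableTopology Γ]
    (hV₀ : AEMeasurable V₀ P) (hfmeas : ∀ w ∈ K, Measurable fun b => f b w)
    (hfcont : ∀ b, ContinuousOn (f b) K) (hbd : ∀ b, ∀ w ∈ K, |f b w| ≤ h b)
    (hint : Integrable (fun ω => h (V₀ ω)) P) {w₀ : Γ} (hw₀ : w₀ ∈ K) {η : ℝ} (hη : 0 < η) :
    ∃ r > 0, ∫ ω, upperEnvelope f (K ∩ ball w₀ r) (V₀ ω) ∂P ≤ ∫ ω, f (V₀ ω) w₀ ∂P + η ∧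
      ∀ w ∈ K ∩ ball w₀ r, ∫ ω, f (V₀ ω) w₀ ∂P ≤ ∫ ω, f (V₀ ω) w ∂P + η := by
  obtain ⟨ρ, hρ, hRball⟩ := Metric.continuousWithinAt_iff.1
    (continuousOn_integral_of_abs_le hV₀ hfmeas hfcont hbd hint w₀ hw₀) η hη
  have henv := (tendsto_integral_upperEnvelope_inter_ball hV₀ hfmeas hfcont hbd hint
    hw₀).eventually (eventually_le_nhds (lt_add_of_pos_right _ hη))
  obtain ⟨r, hr_int, hr, hrρ⟩ := (henv.and (Ioo_mem_nhdsGT hρ)).exists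
  refine ⟨r, hr, hr_int, fun w hw => ?_⟩
  have := hRball hw.1 ((mem_ball.1 hw.2).trans hrρ)
  rw [Real.dist_eq] at this
  linarith [(abs_lt.1 this).1]

theorem tendsto_measure_exists_integral_add_le_average [IsProbabilityMeasure P]
    [SecondCountableTopology Γ] (hK : IsCompact K)
    (hfmeas : ∀ w ∈ K, Measurable fun b => f b w) (hfcont : ∀ b, ContinuousOn (f b) K)
    (hbd : ∀ b, ∀ w ∈ K, |f b w| ≤ h b) (hint : Integrable (fun ω => h (V₀ ω)) P)
    (hindep : Pairwise fun i j => IndepFun (V i) (V j) P)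
    (hid : ∀ n, IdentDistrib (V n) V₀ P P) {η : ℝ} (hη : 0 < η) :
    Tendsto (fun N : ℕ => P {ω | ∃ w ∈ K, ∫ ω', f (V₀ ω') w ∂P + η ≤
      (N : ℝ)⁻¹ * ∑ n ∈ Finset.range N, f (V n ω) w}) atTop (𝓝 0) := by
  have hV₀ : AEMeasurable V₀ P := (hid 0).aemeasurable_snd
  choose! r hr hr_int hr_cont using fun w₀ (hw₀ : w₀ ∈ K) =>
    exists_pos_radius_integral_upperEnvelope_le hV₀ hfmeas hfcont hbd hint hw₀
      (by positivity : 0 < η / 4)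
  obtain ⟨T, hTK, hTcov⟩ :=
    hK.elim_nhds_subcover (fun w => ball w (r w)) fun w hw => ball_mem_nhds w (hr w hw)
  set s : Γ → β → ℝ := fun w₀ => upperEnvelope f (K ∩ ball w₀ (r w₀))
  have hsub : ∀ N : ℕ, {ω | ∃ w ∈ K, ∫ ω', f (V₀ ω') w ∂P + η ≤
      (N : ℝ)⁻¹ * ∑ n ∈ Finset.range N, f (V n ω) w} ⊆ ⋃ w₀ ∈ T, {ω | ∫ ω', s w₀ (V₀ ω') ∂P +
        η / 2 ≤ (N : ℝ)⁻¹ * ∑ n ∈ Finset.range N, s w₀ (V n ω)} := by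
    rintro N ω ⟨w, hwK, hw⟩
    obtain ⟨w₀, hw₀T, hww₀⟩ := mem_iUnion₂.1 (hTcov hwK)
    have hw₀K := hTK w₀ hw₀T
    refine mem_iUnion₂.2 ⟨w₀, hw₀T, ?_⟩
    have henv : (N : ℝ)⁻¹ * ∑ n ∈ Finset.range N, f (V n ω) w ≤
        (N : ℝ)⁻¹ * ∑ n ∈ Finset.range N, s w₀ (V n ω) :=
      mul_le_mul_of_nonneg_left (Finset.sum_le_sum fun n _ =>
        le_upperEnvelope (fun b v hv => hbd b v hv.1) ⟨hwK, hww₀⟩) (by positivity)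
    have hs_int : ∫ ω', s w₀ (V₀ ω') ∂P ≤ ∫ ω', f (V₀ ω') w₀ ∂P + η / 4 := hr_int w₀ hw₀K
    rw [mem_ofPred_eq]
    linarith [hr_cont w₀ hw₀K w ⟨hwK, hww₀⟩]
  have hcenter : ∀ w₀ ∈ T, Tendsto (fun N : ℕ => P {ω | ∫ ω', s w₀ (V₀ ω') ∂P + η / 2 ≤
      (N : ℝ)⁻¹ * ∑ n ∈ Finset.range N, s w₀ (V n ω)}) atTop (𝓝 0) := by
    intro w₀ hw₀T
    have hw₀K := hTK w₀ hw₀T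
    have hs : Measurable (s w₀) := measurable_upperEnvelope (fun w hw => hfmeas w hw.1)
      fun b => (hfcont b).mono inter_subset_left
    have hsint : Integrable (fun ω => s w₀ (V₀ ω)) P :=
      hint.mono' (hs.comp_aemeasurable hV₀).aestronglyMeasurable (Eventually.of_forall fun ω =>
        abs_upperEnvelope_le (S := K ∩ ball w₀ (r w₀)) ⟨w₀, hw₀K, mem_ball_self (hr w₀ hw₀K)⟩
          (fun b w hw => hbd b w hw.1) (V₀ ω))
    exact tendsto_measure_integral_add_le_average hs hsint hindep hid (half_pos hη)
  exact tendsto_of_tendsto_of_tendsto_of_le_of_le tendsto_const_nhds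
    (by simpa using tendsto_finsetSum T hcenter) (fun _ => zero_le)
    fun N => (measure_mono (hsub N)).trans (measure_biUnion_finset_le T _)

theorem tendstoUniformlyOnInMeasure_average [IsProbabilityMeasure P]
    [SecondCountableTopology Γ] (hK : IsCompact K)
    (hfmeas : ∀ w ∈ K, Measurable fun b => f b w) (hfcont : ∀ b, ContinuousOn (f b) K)
    (hbd : ∀ b, ∀ w ∈ K, |f b w| ≤ h b) (hint : Integrable (fun ω => h (V₀ ω)) P)
    (hindep : Pairwise fun i j => IndepFun (V i) (V j) P)
    (hid : ∀ n, IdentDistrib (V n) V₀ P P) :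
    TendstoUniformlyOnInMeasure P
      (fun (N : ℕ) ω w => (N : ℝ)⁻¹ * ∑ n ∈ Finset.range N, f (V n ω) w)
      (fun w => ∫ ω, f (V₀ ω) w ∂P) K atTop := by
  intro η hη
  have hupper := tendsto_measure_exists_integral_add_le_average hK hfmeas hfcont hbd hint
    hindep hid hη
  have hlower := tendsto_measure_exists_integral_add_le_average (f := fun b w => -f b w) hK
    (fun w hw => (hfmeas w hw).neg) (fun b => (hfcont b).neg)
    (fun b w hw => (abs_neg (f b w)).trans_le (hbd b w hw)) hint hindep hid hη
  refine tendsto_measure_of_subset_union (fun N => ?_) hupper hlower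
  rintro ω ⟨w, hwK, hw⟩
  simp only [integral_neg, Finset.sum_neg_distrib, mul_neg, mem_union, mem_ofPred_eq]
  rcases le_abs'.1 hw with hlow | hhigh
  · exact Or.inr ⟨w, hwK, by linarith⟩
  · exact Or.inl ⟨w, hwK, by linarith⟩

theorem tendstoUniformlyOnInMeasure_average_of_mem [IsProbabilityMeasure P]
    [SecondCountableTopology Γ] {O : Set β} (hO : MeasurableSet O)
    (hK : IsCompact K) (hfmeas : ∀ w ∈ K, Measurable fun z : O => f z w)
    (hfcont : ∀ z ∈ O, ContinuousOn (f z) K) (hbd : ∀ z ∈ O, ∀ w ∈ K, |f z w| ≤ h z)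
    (hint : Integrable (fun ω => h (V₀ ω)) P) (hV₀O : ∀ ω, V₀ ω ∈ O) (hVO : ∀ n ω, V n ω ∈ O)
    (hindep : Pairwise fun i j => IndepFun (V i) (V j) P)
    (hid : ∀ n, IdentDistrib (V n) V₀ P P) :
    TendstoUniformlyOnInMeasure P
        (fun (N : ℕ) ω w => (N : ℝ)⁻¹ * ∑ n ∈ Finset.range N, f (V n ω) w)
        (fun w => ∫ ω, f (V₀ ω) w ∂P) K atTop ∧
      ContinuousOn (fun w => ∫ ω, f (V₀ ω) w ∂P) K := by
  obtain ⟨ω₀⟩ := nonempty_of_isProbabilityMeasure P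
  obtain ⟨r, hr, hrO⟩ := exists_measurable_retraction hO ⟨V₀ ω₀, hV₀O ω₀⟩
  have hfr : ∀ w ∈ K, Measurable fun b => f (r b) w := fun w hw => (hfmeas w hw).comp hr
  have hbdr : ∀ b, ∀ w ∈ K, |f (r b) w| ≤ h (r b) := fun b => hbd (r b) (r b).2
  have hintr : Integrable (fun ω => h (r (V₀ ω))) P := by simpa only [hrO _ (hV₀O _)] using hint
  have hULLN := tendstoUniformlyOnInMeasure_average hK hfr (fun b => hfcont (r b) (r b).2) hbdr
    hintr hindep hid
  have hcont := continuousOn_integral_of_abs_le (hid 0).aemeasurable_snd hfr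
    (fun b => hfcont (r b) (r b).2) hbdr hintr
  simp only [hrO _ (hV₀O _), hrO _ (hVO _ _)] at hULLN hcont
  exact ⟨hULLN, hcont⟩

end UniformLawOfLargeNumbers

section PlugIn

variable {H : Type*} [NormedAddCommGroup H] [InnerProductSpace ℝ H] {q : ℕ}

lemma average_norm_sub_le_sqrt_sum_inner (x : ℕ → H) (a b : Fin q → H) (N : ℕ) :
    (N : ℝ)⁻¹ * ∑ n ∈ Finset.range N, ‖(WithLp.toLp 2 fun j => ⟪x n, b j⟫ :
      EuclideanSpace ℝ (Fin q)) - WithLp.toLp 2 fun j => ⟪x n, a j⟫‖ ≤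
      √(∑ j, ⟪(N : ℝ)⁻¹ • ∑ n ∈ Finset.range N, ⟪b j - a j, x n⟫ • x n, b j - a j⟫) := by
  set d : ℕ → ℝ := fun n => ‖(WithLp.toLp 2 fun j => ⟪x n, b j⟫ :
      EuclideanSpace ℝ (Fin q)) - WithLp.toLp 2 fun j => ⟪x n, a j⟫‖
  have hd : ∀ n, d n ^ 2 = ∑ j, ⟪b j - a j, x n⟫ ^ 2 := fun n => by
    simp only [d, EuclideanSpace.norm_sq_eq, PiLp.sub_apply, Real.norm_eq_abs, sq_abs,
      ← inner_sub_right, real_inner_comm]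
  have hquad : ∑ j, ⟪(N : ℝ)⁻¹ • ∑ n ∈ Finset.range N, ⟪b j - a j, x n⟫ • x n, b j - a j⟫ =
      (∑ n ∈ Finset.range N, d n ^ 2) / N := by
    simp only [hd, real_inner_smul_left, sum_inner, real_inner_comm (x _), ← sq]
    rw [← Finset.mul_sum, Finset.sum_comm, inv_mul_eq_div]
  rw [hquad, inv_mul_eq_div]
  refine Real.le_sqrt_of_sq_le ?_
  simpa using sum_div_card_sq_le_sum_sq_div_card (s := Finset.range N) (f := d)

lemma abs_average_sub_le_mul_sqrt_sum_inner {O : Set (EuclideanSpace ℝ (Fin q) × ℝ)}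
    {ζ : EuclideanSpace ℝ (Fin q) × ℝ → ℝ} {C : ℝ} (hC : 0 ≤ C)
    (hLip : ∀ (x x' : EuclideanSpace ℝ (Fin q)) (y : ℝ),
      (x, y) ∈ O → (x', y) ∈ O → |ζ (x, y) - ζ (x', y)| ≤ C * ‖x - x'‖)
    (x : ℕ → H) (y : ℕ → ℝ) (a b : Fin q → H)
    (ha : ∀ n, ((WithLp.toLp 2 fun j => ⟪x n, a j⟫ : EuclideanSpace ℝ (Fin q)), y n) ∈ O)
    (hb : ∀ n, ((WithLp.toLp 2 fun j => ⟪x n, b j⟫ : EuclideanSpace ℝ (Fin q)), y n) ∈ O)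
    (N : ℕ) :
    |(N : ℝ)⁻¹ * ∑ n ∈ Finset.range N, ζ (WithLp.toLp 2 fun j => ⟪x n, b j⟫, y n) -
      (N : ℝ)⁻¹ * ∑ n ∈ Finset.range N, ζ (WithLp.toLp 2 fun j => ⟪x n, a j⟫, y n)| ≤
      C * √(∑ j, ⟪(N : ℝ)⁻¹ • ∑ n ∈ Finset.range N, ⟪b j - a j, x n⟫ • x n, b j - a j⟫) := by
  rw [← mul_sub, ← Finset.sum_sub_distrib, abs_mul, abs_inv, Nat.abs_cast]
  calc (N : ℝ)⁻¹ * |∑ n ∈ Finset.range N,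
        (ζ (WithLp.toLp 2 fun j => ⟪x n, b j⟫, y n) - ζ (WithLp.toLp 2 fun j => ⟪x n, a j⟫, y n))|
      ≤ (N : ℝ)⁻¹ * ∑ n ∈ Finset.range N, C * ‖(WithLp.toLp 2 fun j => ⟪x n, b j⟫ :
          EuclideanSpace ℝ (Fin q)) - WithLp.toLp 2 fun j => ⟪x n, a j⟫‖ := by
        gcongr
        exact (Finset.abs_sum_le_sum_abs _ _).trans
          (Finset.sum_le_sum fun n _ => hLip _ _ _ (hb n) (ha n))
    _ ≤ C * √(∑ j, ⟪(N : ℝ)⁻¹ • ∑ n ∈ Finset.range N, ⟪b j - a j, x n⟫ • x n, b j - a j⟫) := by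
        rw [← Finset.mul_sum, mul_left_comm]
        exact mul_le_mul_of_nonneg_left (average_norm_sub_le_sqrt_sum_inner x a b N) hC

end PlugIn

theorem SIR_neural_network_weights_consistency_general
    {Ω : Type*} [MeasurableSpace Ω] (P : Measure Ω) [IsProbabilityMeasure P]
    {H : Type*} [NormedAddCommGroup H] [InnerProductSpace ℝ H]
    [MeasurableSpace H] [BorelSpace H]
    {q q₂ : ℕ}
    -- the pair (X, Y) and its i.i.d. copies
    (X : Ω → H) (hXmeas : Measurable X)
    (Y : Ω → ℝ) (hYmeas : Measurable Y)
    (Xn : ℕ → Ω → H) (Yn : ℕ → Ω → ℝ)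
    (hXnmeas : ∀ n, Measurable (Xn n)) (hYnmeas : ∀ n, Measurable (Yn n))
    (hiid : iIndepFun (m := fun _ : ℕ => (inferInstance : MeasurableSpace (H × ℝ)))
      (fun n ω => (Xn n ω, Yn n ω)) P)
    (hident : ∀ n, Measure.map (fun ω => (Xn n ω, Yn n ω)) P
      = Measure.map (fun ω => (X ω, Y ω)) P)
    -- the (fixed) EDR directions and their random estimates
    (a : Fin q → H)
    (aN : ℕ → Fin q → Ω → H)
    -- the empirical second-moment operator Γ̂_N
    (ΓhatN : ℕ → Ω → H → H)
    (hΓhatN : ∀ (N : ℕ) (ω : Ω) (u : H),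
      ΓhatN N ω u = (N : ℝ)⁻¹ • ∑ n ∈ Finset.range N, ⟪u, Xn n ω⟫ • Xn n ω)
    -- consistency of the estimated projections
    (haNcons : ∀ j : Fin q, ∀ ε : ℝ, 0 < ε →
      Filter.Tendsto
        (fun N : ℕ => P {ω | ε < ⟪ΓhatN N ω (aN N j ω - a j), aN N j ω - a j⟫})
        Filter.atTop (nhds 0))
    -- the open set O, the compact set of weights W
    (O : Set (EuclideanSpace ℝ (Fin q) × ℝ)) (hO : IsOpen O)
    (W : Set (PerceptronWeights q q₂)) (hWne : W.Nonempty) (hWcpt : IsCompact W)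
    -- activation, loss and the induced criterion ζ
    (ζ : EuclideanSpace ℝ (Fin q) × ℝ → PerceptronWeights q q₂ → ℝ)
    -- Z, Z_n and the plug-in Z̃_N^n, all with values in O
    (Z : Ω → EuclideanSpace ℝ (Fin q) × ℝ)
    (hZ : ∀ ω, Z ω = ((WithLp.toLp 2 (fun j => ⟪X ω, a j⟫) : EuclideanSpace ℝ (Fin q)), Y ω))
    (hZO : ∀ ω, Z ω ∈ O)
    (hZnO : ∀ (n : ℕ) (ω : Ω),
      ((WithLp.toLp 2 (fun j => ⟪Xn n ω, a j⟫) : EuclideanSpace ℝ (Fin q)), Yn n ω) ∈ O)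
    (Ztilde : ℕ → ℕ → Ω → EuclideanSpace ℝ (Fin q) × ℝ)
    (hZtilde : ∀ (N n : ℕ) (ω : Ω),
      Ztilde N n ω = ((WithLp.toLp 2 (fun j => ⟪Xn n ω, aN N j ω⟫) : EuclideanSpace ℝ (Fin q)), Yn n ω))
    (hZtildeO : ∀ (N n : ℕ) (ω : Ω), Ztilde N n ω ∈ O)
    -- (A7): continuity in the weights
    (hA7 : ∀ z ∈ O, ContinuousOn (ζ z) W)
    -- (A8): domination by an integrable function
    (ζtilde : EuclideanSpace ℝ (Fin q) × ℝ → ℝ)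
    (hdom : ∀ z ∈ O, ∀ w ∈ W, |ζ z w| ≤ ζtilde z)
    (hint : Integrable (fun ω => ζtilde (Z ω)) P)
    -- (A9): Lipschitz continuity in the first argument, uniformly over W
    (C : PerceptronWeights q q₂ → ℝ)
    (hA9 : ∀ w ∈ W, ∀ (x x' : EuclideanSpace ℝ (Fin q)) (y : ℝ),
      (x, y) ∈ O → (x', y) ∈ O → |ζ (x, y) w - ζ (x', y) w| ≤ C w * ‖x - x'‖)
    (hCbdd : ∃ M : ℝ, ∀ w ∈ W, C w ≤ M)
    -- (A10): measurability in the first argument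
    (hA10 : ∀ w ∈ W, Measurable fun z : O => ζ (z : EuclideanSpace ℝ (Fin q) × ℝ) w)
    -- the set of minimizers of the theoretical risk
    (Wstar : Set (PerceptronWeights q q₂))
    (hWstar : Wstar = {w ∈ W | ∀ w' ∈ W, ∫ ω, ζ (Z ω) w ∂P ≤ ∫ ω, ζ (Z ω) w' ∂P})
    -- measurable minimizers of the plug-in empirical risk
    (wN : ℕ → Ω → PerceptronWeights q q₂)
    (hwNmin : ∀ (N : ℕ) (ω : Ω), wN N ω ∈ W ∧
      ∀ w ∈ W, ∑ n ∈ Finset.range N, ζ (Ztilde N n ω) (wN N ω)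
        ≤ ∑ n ∈ Finset.range N, ζ (Ztilde N n ω) w) :
    ∀ ε : ℝ, 0 < ε →
      Filter.Tendsto (fun N : ℕ => P {ω | ε < Metric.infDist (wN N ω) Wstar})
        Filter.atTop (nhds 0) := by
  intro ε hε
  set coords : H × ℝ → EuclideanSpace ℝ (Fin q) × ℝ :=
    fun p => (WithLp.toLp 2 fun j => ⟪p.1, a j⟫, p.2)
  have hcoords : Measurable coords :=
    ((WithLp.measurable_toLp 2 _).comp (measurable_pi_lambda _ fun j =>
      (continuous_id.inner continuous_const).measurable.comp measurable_fst)).prodMk measurable_snd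
  have hZcoords : Z = fun ω => coords (X ω, Y ω) := funext hZ
  have hpair : ∀ n, IdentDistrib (fun ω => (Xn n ω, Yn n ω)) (fun ω => (X ω, Y ω)) P P := fun n =>
    ⟨((hXnmeas n).prodMk (hYnmeas n)).aemeasurable, (hXmeas.prodMk hYmeas).aemeasurable, hident n⟩
  obtain ⟨hULLN, hRcont⟩ := tendstoUniformlyOnInMeasure_average_of_mem
    (V := fun n ω => coords (Xn n ω, Yn n ω)) hO.measurableSet hWcpt hA10 hA7 hdom hint hZO hZnO
    (fun i j hij => (hiid.indepFun hij).comp hcoords hcoords)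
    (fun n => hZcoords ▸ (hpair n).comp hcoords)
  obtain ⟨M, hM⟩ := hCbdd
  have hplugin : ∀ (N : ℕ) ω, ∀ w ∈ W,
      |(N : ℝ)⁻¹ * ∑ n ∈ Finset.range N, ζ (Ztilde N n ω) w -
        (N : ℝ)⁻¹ * ∑ n ∈ Finset.range N, ζ (coords (Xn n ω, Yn n ω)) w| ≤
      max M 1 * √(∑ j, ⟪ΓhatN N ω (aN N j ω - a j), aN N j ω - a j⟫) := by
    intro N ω w hw
    simp only [hZtilde, hΓhatN]
    exact abs_average_sub_le_mul_sqrt_sum_inner (ζ := fun z => ζ z w)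
      (zero_le_one.trans (le_max_right M 1))
      (fun x x' y hx hx' => (hA9 w hw x x' y hx hx').trans
        (mul_le_mul_of_nonneg_right (le_max_of_le_left (hM w hw)) (norm_nonneg _)))
      (fun n => Xn n ω) (fun n => Yn n ω) a (fun j => aN N j ω) (fun n => hZnO n ω)
      (fun n => hZtilde N n ω ▸ hZtildeO N n ω) N
  subst hWstar
  refine tendsto_measure_lt_infDist_argmin hWcpt hWne hRcont (hULLN.of_abs_sub_le
    (fun η hη => tendsto_measure_le_mul_sqrt_sum haNcons (by positivity) hη) hplugin)
    (fun N ω => ⟨(hwNmin N ω).1, fun v hv => ?_⟩) hε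
  exact mul_le_mul_of_nonneg_left ((hwNmin N ω).2 v hv) (by positivity)

/-- Consistency of the SIR neural network weights: in the perceptron
setting, under (A7)–(A10) and consistency of the estimated directions
`⟪Γ_X(a_j^N − a_j), a_j^N − a_j⟫ →_p 0` and `⟪Γ̂_N(a_j^N − a_j), a_j^N − a_j⟫ →_p 0`,
any measurable minimizers `w*_N` of the plug-in empirical risk satisfy
`d(w*_N, W*) →_p 0`, where `W*` is the set of minimizers of the theoretical risk. -/
theorem SIR_neural_network_weights_consistency
    {Ω : Type*} [MeasurableSpace Ω] (P : Measure Ω) [IsProbabilityMeasure P]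
    {H : Type*} [NormedAddCommGroup H] [InnerProductSpace ℝ H] [CompleteSpace H]
    [SecondCountableTopology H] [MeasurableSpace H] [BorelSpace H]
    {q q₂ : ℕ}
    -- the pair (X, Y) and its i.i.d. copies
    (X : Ω → H) (hXmeas : Measurable X) (hXcentered : ∫ ω, X ω ∂P = 0)
    (hX4 : Integrable (fun ω => ‖X ω‖ ^ 4) P)
    (Y : Ω → ℝ) (hYmeas : Measurable Y)
    (Xn : ℕ → Ω → H) (Yn : ℕ → Ω → ℝ)
    (hXnmeas : ∀ n, Measurable (Xn n)) (hYnmeas : ∀ n, Measurable (Yn n))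
    (hiid : iIndepFun (m := fun _ : ℕ => (inferInstance : MeasurableSpace (H × ℝ)))
      (fun n ω => (Xn n ω, Yn n ω)) P)
    (hident : ∀ n, Measure.map (fun ω => (Xn n ω, Yn n ω)) P
      = Measure.map (fun ω => (X ω, Y ω)) P)
    -- the (fixed) EDR directions and their random estimates
    (a : Fin q → H)
    (aN : ℕ → Fin q → Ω → H) (haNmeas : ∀ N j, Measurable (aN N j))
    -- the empirical second-moment operator Γ̂_N
    (ΓhatN : ℕ → Ω → H → H)
    (hΓhatN : ∀ (N : ℕ) (ω : Ω) (u : H),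
      ΓhatN N ω u = (N : ℝ)⁻¹ • ∑ n ∈ Finset.range N, ⟪u, Xn n ω⟫ • Xn n ω)
    -- consistency of the estimated projections
    (haNcons : ∀ j : Fin q, ∀ ε : ℝ, 0 < ε →
      Filter.Tendsto
        (fun N : ℕ => P {ω | ε < ⟪ΓhatN N ω (aN N j ω - a j), aN N j ω - a j⟫})
        Filter.atTop (nhds 0))
    -- the open set O, the compact set of weights W
    (O : Set (EuclideanSpace ℝ (Fin q) × ℝ)) (hO : IsOpen O)
    (W : Set (PerceptronWeights q q₂)) (hWne : W.Nonempty) (hWcpt : IsCompact W)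
    -- activation, loss and the induced criterion ζ
    (g : ℝ → ℝ) (L : ℝ → ℝ → ℝ)
    (ζ : EuclideanSpace ℝ (Fin q) × ℝ → PerceptronWeights q q₂ → ℝ)
    (hζ : ∀ (z : EuclideanSpace ℝ (Fin q) × ℝ) (w : PerceptronWeights q q₂),
      ζ z w = L (∑ i : Fin q₂, w.1 i * g ((∑ j : Fin q, w.2.1 i j * z.1 j) + w.2.2 i)) z.2)
    -- Z, Z_n and the plug-in Z̃_N^n, all with values in O
    (Z : Ω → EuclideanSpace ℝ (Fin q) × ℝ)
    (hZ : ∀ ω, Z ω = ((WithLp.toLp 2 (fun j => ⟪X ω, a j⟫) : EuclideanSpace ℝ (Fin q)), Y ω))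
    (hZO : ∀ ω, Z ω ∈ O)
    (hZnO : ∀ (n : ℕ) (ω : Ω),
      ((WithLp.toLp 2 (fun j => ⟪Xn n ω, a j⟫) : EuclideanSpace ℝ (Fin q)), Yn n ω) ∈ O)
    (Ztilde : ℕ → ℕ → Ω → EuclideanSpace ℝ (Fin q) × ℝ)
    (hZtilde : ∀ (N n : ℕ) (ω : Ω),
      Ztilde N n ω = ((WithLp.toLp 2 (fun j => ⟪Xn n ω, aN N j ω⟫) : EuclideanSpace ℝ (Fin q)), Yn n ω))
    (hZtildeO : ∀ (N n : ℕ) (ω : Ω), Ztilde N n ω ∈ O)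
    -- (A7): continuity in the weights
    (hA7 : ∀ z ∈ O, ContinuousOn (ζ z) W)
    -- (A8): domination by an integrable function
    (ζtilde : EuclideanSpace ℝ (Fin q) × ℝ → ℝ)
    (hζtmeas : Measurable fun z : O => ζtilde (z : EuclideanSpace ℝ (Fin q) × ℝ))
    (hdom : ∀ z ∈ O, ∀ w ∈ W, |ζ z w| ≤ ζtilde z)
    (hint : Integrable (fun ω => ζtilde (Z ω)) P)
    -- (A9): Lipschitz continuity in the first argument, uniformly over W
    (C : PerceptronWeights q q₂ → ℝ) (hCpos : ∀ w ∈ W, 0 < C w)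
    (hA9 : ∀ w ∈ W, ∀ (x x' : EuclideanSpace ℝ (Fin q)) (y : ℝ),
      (x, y) ∈ O → (x', y) ∈ O → |ζ (x, y) w - ζ (x', y) w| ≤ C w * ‖x - x'‖)
    (hCbdd : ∃ M : ℝ, ∀ w ∈ W, C w ≤ M)
    -- (A10): measurability in the first argument
    (hA10 : ∀ w ∈ W, Measurable fun z : O => ζ (z : EuclideanSpace ℝ (Fin q) × ℝ) w)
    -- the covariance operator of X and consistency of the estimated directions for it
    (ΓX : H →L[ℝ] H) (hΓX : ∀ u, ΓX u = ∫ ω, ⟪u, X ω⟫ • X ω ∂P)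
    (haNconsX : ∀ j : Fin q, ∀ ε : ℝ, 0 < ε →
      Filter.Tendsto
        (fun N : ℕ => P {ω | ε < ⟪ΓX (aN N j ω - a j), aN N j ω - a j⟫})
        Filter.atTop (nhds 0))
    -- the set of minimizers of the theoretical risk
    (Wstar : Set (PerceptronWeights q q₂))
    (hWstar : Wstar = {w ∈ W | ∀ w' ∈ W, ∫ ω, ζ (Z ω) w ∂P ≤ ∫ ω, ζ (Z ω) w' ∂P})
    -- measurable minimizers of the plug-in empirical risk
    (wN : ℕ → Ω → PerceptronWeights q q₂) (hwNmeas : ∀ N, Measurable (wN N))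
    (hwNmin : ∀ (N : ℕ) (ω : Ω), wN N ω ∈ W ∧
      ∀ w ∈ W, ∑ n ∈ Finset.range N, ζ (Ztilde N n ω) (wN N ω)
        ≤ ∑ n ∈ Finset.range N, ζ (Ztilde N n ω) w) :
    ∀ ε : ℝ, 0 < ε →
      Filter.Tendsto (fun N : ℕ => P {ω | ε < Metric.infDist (wN N ω) Wstar})
        Filter.atTop (nhds 0) :=
  SIR_neural_network_weights_consistency_general P X hXmeas Y hYmeas Xn Yn hXnmeas hYnmeas hiid
    hident a aN ΓhatN hΓhatN haNcons O hO W hWne hWcpt ζ Z hZ hZO hZnO Ztilde hZtilde hZtildeO hA7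
    ζtilde hdom hint C hA9 hCbdd hA10 Wstar hWstar wN hwNmin
end

section
/- Let H be a real Hilbert space and Γ_X, Γ_E continuous positive self-adjoint operators on H. Suppose a₁ ∈ H satisfies ⟨Γ_X a₁,a₁⟩ = 1 and Γ_E a₁ = λ₁ Γ_X a₁ (so λ₁ = ⟨Γ_E a₁,a₁⟩), and that there is λ₂ with 0 ≤ λ₂ < λ₁ such that ⟨Γ_E u,u⟩ ≤ λ₂ ⟨Γ_X u,u⟩ for every u ∈ H with ⟨Γ_X u,a₁⟩ = 0. Then for every a ∈ H with ⟨Γ_X a,a₁⟩ = 1, setting μ = ⟨Γ_X(a − a₁), a − a₁⟩, one has ⟨Γ_E a,a⟩ / ⟨Γ_X a,a⟩ ≤ (λ₁ + λ₂ μ)/(1 + μ); in particular λ₁^{-1}⟨Γ_E a,a⟩/⟨Γ_X a,a⟩ ≤ (1 + λ₁^{-1}λ₂ μ)/(1 + μ) < 1 whenever μ > 0. -/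
open scoped RealInnerProductSpace

/-! Write `a = a₁ + u`; the normalisation `⟪Γ_X a, a₁⟫ = 1` says exactly that `u` is
`Γ_X`-orthogonal to `a₁`, and then, `a₁` being a generalised eigenvector, also `Γ_E`-orthogonal
to it. Both quadratic forms therefore split: `⟪Γ_X a, a⟫ = 1 + μ` and
`⟪Γ_E a, a⟫ = λ₁ + ⟪Γ_E u, u⟫ ≤ λ₁ + λ₂ μ`. -/

theorem LinearMap.IsSymmetric.inner_map_add_self_of_inner_map_eq_zero
    {𝕜 E : Type*} [RCLike 𝕜] [NormedAddCommGroup E] [InnerProductSpace 𝕜 E]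
    {T : E →ₗ[𝕜] E} (hT : T.IsSymmetric) {x y : E} (h : inner 𝕜 (T y) x = 0) :
    inner 𝕜 (T (x + y)) (x + y) = inner 𝕜 (T x) x + inner 𝕜 (T y) y := by
  have h' : inner 𝕜 (T x) y = 0 := by
    rw [hT, ← inner_conj_symm, h, map_zero]
  rw [map_add, inner_add_left, inner_add_right, inner_add_right, h, h']
  ring

theorem one_add_mul_div_one_add_lt_one {c μ : ℝ} (hc : c < 1) (hμ : 0 < μ) :
    (1 + c * μ) / (1 + μ) < 1 := by
  rw [div_lt_one (by linarith)]
  nlinarith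

theorem rayleigh_quotient_gap_bound_general
    {H : Type*} [NormedAddCommGroup H] [InnerProductSpace ℝ H]
    (ΓX ΓE : H →L[ℝ] H)
    (hΓXpos : ∀ u : H, 0 ≤ ⟪ΓX u, u⟫) (hΓXsa : ∀ u v : H, ⟪ΓX u, v⟫ = ⟪u, ΓX v⟫)
    (hΓEsa : ∀ u v : H, ⟪ΓE u, v⟫ = ⟪u, ΓE v⟫)
    (a₁ : H) (lam₁ lam₂ : ℝ)
    (ha₁norm : ⟪ΓX a₁, a₁⟫ = 1)
    (ha₁eig : ΓE a₁ = lam₁ • ΓX a₁)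
    (hlam₁ : lam₁ = ⟪ΓE a₁, a₁⟫)
    (hlam₂nonneg : 0 ≤ lam₂) (hlt : lam₂ < lam₁)
    (hgap : ∀ u : H, ⟪ΓX u, a₁⟫ = 0 → ⟪ΓE u, u⟫ ≤ lam₂ * ⟪ΓX u, u⟫)
    (a : H) (ha : ⟪ΓX a, a₁⟫ = 1)
    (μ : ℝ) (hμ : μ = ⟪ΓX (a - a₁), a - a₁⟫) :
    ⟪ΓE a, a⟫ / ⟪ΓX a, a⟫ ≤ (lam₁ + lam₂ * μ) / (1 + μ) ∧
      (lam₁⁻¹ * (⟪ΓE a, a⟫ / ⟪ΓX a, a⟫) ≤ (1 + lam₁⁻¹ * lam₂ * μ) / (1 + μ)) ∧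
      (0 < μ → (1 + lam₁⁻¹ * lam₂ * μ) / (1 + μ) < 1) := by
  set u := a - a₁
  have hlam₁pos : 0 < lam₁ := hlam₂nonneg.trans_lt hlt
  have hμnonneg : 0 ≤ μ := hμ ▸ hΓXpos u
  have hXu : ⟪ΓX u, a₁⟫ = 0 := by simp [u, inner_sub_left, ha, ha₁norm]
  have hEu : ⟪ΓE u, a₁⟫ = 0 := by
    rw [hΓEsa, ha₁eig, inner_smul_right, ← hΓXsa, hXu, mul_zero]
  have hXsym : (ΓX : H →ₗ[ℝ] H).IsSymmetric := hΓXsa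
  have hEsym : (ΓE : H →ₗ[ℝ] H).IsSymmetric := hΓEsa
  have hdecomp : a = a₁ + u := (add_sub_cancel a₁ a).symm
  have hXa : ⟪ΓX a, a⟫ = 1 + μ := by
    rw [hdecomp, hμ, ← ha₁norm]
    exact hXsym.inner_map_add_self_of_inner_map_eq_zero hXu
  have hEa : ⟪ΓE a, a⟫ ≤ lam₁ + lam₂ * μ := by
    have hsplit : ⟪ΓE a, a⟫ = lam₁ + ⟪ΓE u, u⟫ := by
      rw [hdecomp, hlam₁]
      exact hEsym.inner_map_add_self_of_inner_map_eq_zero hEu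
    linarith [hμ ▸ hgap u hXu]
  have hbound : ⟪ΓE a, a⟫ / ⟪ΓX a, a⟫ ≤ (lam₁ + lam₂ * μ) / (1 + μ) := by
    rw [hXa]
    gcongr
  have hnormalised :
      lam₁⁻¹ * ((lam₁ + lam₂ * μ) / (1 + μ)) = (1 + lam₁⁻¹ * lam₂ * μ) / (1 + μ) := by
    field_simp
  refine ⟨hbound, hnormalised ▸ mul_le_mul_of_nonneg_left hbound (inv_nonneg.2 hlam₁pos.le), ?_⟩
  exact one_add_mul_div_one_add_lt_one ((inv_mul_lt_one₀ hlam₁pos).2 hlt)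

/-- If `⟪Γ_X a₁,a₁⟫ = 1`, `Γ_E a₁ = λ₁ Γ_X a₁`, and
`⟪Γ_E u,u⟫ ≤ λ₂ ⟪Γ_X u,u⟫` whenever `⟪Γ_X u,a₁⟫ = 0`, with `0 ≤ λ₂ < λ₁`, then for every
`a` with `⟪Γ_X a,a₁⟫ = 1` and `μ = ⟪Γ_X(a−a₁),a−a₁⟫` one has
`⟪Γ_E a,a⟫/⟪Γ_X a,a⟫ ≤ (λ₁ + λ₂ μ)/(1+μ)`; in particular
`λ₁⁻¹ ⟪Γ_E a,a⟫/⟪Γ_X a,a⟫ ≤ (1 + λ₁⁻¹ λ₂ μ)/(1+μ) < 1` whenever `μ > 0`. -/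
theorem rayleigh_quotient_gap_bound
    {H : Type*} [NormedAddCommGroup H] [InnerProductSpace ℝ H]
    (ΓX ΓE : H →L[ℝ] H)
    (hΓXpos : ∀ u : H, 0 ≤ ⟪ΓX u, u⟫) (hΓXsa : ∀ u v : H, ⟪ΓX u, v⟫ = ⟪u, ΓX v⟫)
    (hΓEpos : ∀ u : H, 0 ≤ ⟪ΓE u, u⟫) (hΓEsa : ∀ u v : H, ⟪ΓE u, v⟫ = ⟪u, ΓE v⟫)
    (a₁ : H) (lam₁ lam₂ : ℝ)
    (ha₁norm : ⟪ΓX a₁, a₁⟫ = 1)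
    (ha₁eig : ΓE a₁ = lam₁ • ΓX a₁)
    (hlam₁ : lam₁ = ⟪ΓE a₁, a₁⟫)
    (hlam₂nonneg : 0 ≤ lam₂) (hlt : lam₂ < lam₁)
    (hgap : ∀ u : H, ⟪ΓX u, a₁⟫ = 0 → ⟪ΓE u, u⟫ ≤ lam₂ * ⟪ΓX u, u⟫)
    (a : H) (ha : ⟪ΓX a, a₁⟫ = 1)
    (μ : ℝ) (hμ : μ = ⟪ΓX (a - a₁), a - a₁⟫) :
    ⟪ΓE a, a⟫ / ⟪ΓX a, a⟫ ≤ (lam₁ + lam₂ * μ) / (1 + μ) ∧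
      (lam₁⁻¹ * (⟪ΓE a, a⟫ / ⟪ΓX a, a⟫) ≤ (1 + lam₁⁻¹ * lam₂ * μ) / (1 + μ)) ∧
      (0 < μ → (1 + lam₁⁻¹ * lam₂ * μ) / (1 + μ) < 1) :=
  rayleigh_quotient_gap_bound_general ΓX ΓE hΓXpos hΓXsa hΓEsa a₁ lam₁ lam₂ ha₁norm ha₁eig hlam₁
    hlam₂nonneg hlt hgap a ha μ hμ
end

section
/- Let g(x) = eˣ/(1+eˣ) be the logistic sigmoid and, for a weight vector w = ((w_i^{(0)})_{i≤q₂}, (w_i^{(1)})_{i≤q₂} with each w_i^{(1)} ∈ ℝ^q, (w_i^{(2)})_{i≤q₂}), define the perceptron output ψ_w(u) = Σ_{i=1}^{q₂} w_i^{(2)} g(⟨w_i^{(1)}, u⟩ + w_i^{(0)}) for u ∈ ℝ^q, and the squared-error loss ζ((u,y),w) = (ψ_w(u) − y)². Then for every M ≥ 0, every y with |y| ≤ M, every w, and all u, u' ∈ ℝ^q, |ζ((u,y),w) − ζ((u',y),w)| ≤ C(w)‖u − u'‖ with C(w) = (1/2)(Σ_{i=1}^{q₂}|w_i^{(2)}|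 + M) · Σ_{i=1}^{q₂} |w_i^{(2)}| ‖w_i^{(1)}‖. In particular, assumption (A9) (Lipschitz continuity of ζ in its first argument, with constant depending on w) holds for the one-hidden-layer sigmoid perceptron with square error loss when the targets Y are bounded. -/
open scoped RealInnerProductSpace NNReal

/-! The logistic sigmoid `σ` takes values in `(0, 1)` and `σ' = σ (1 - σ) ≤ 1/4`, so by
Cauchy–Schwarz the perceptron output `ψ` is bounded by `Σᵢ |w⁽²⁾ᵢ|` and Lipschitz with constant
`¼ Σᵢ |w⁽²⁾ᵢ| ‖w⁽¹⁾ᵢ‖`. Writing `(a - y)² - (b - y)² = (a + b - 2y)(a - b)` with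
`|a + b - 2y| ≤ 2 (Σᵢ |w⁽²⁾ᵢ| + M)` gives the constant `C(w)`. -/

namespace Real

lemma exp_div_one_add_exp (x : ℝ) : exp x / (1 + exp x) = sigmoid x := by
  rw [sigmoid_def, exp_neg]
  field_simp
  ring

lemma abs_sigmoid_le_one (x : ℝ) : |sigmoid x| ≤ 1 :=
  abs_le.mpr ⟨by linarith [sigmoid_nonneg x], sigmoid_le_one x⟩

lemma lipschitzWith_sigmoid : LipschitzWith 4⁻¹ sigmoid := by
  refine lipschitzWith_of_nnnorm_deriv_le differentiable_sigmoid fun x => ?_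
  rw [deriv_sigmoid, ← NNReal.coe_le_coe, coe_nnnorm, norm_eq_abs,
    abs_of_nonneg (mul_nonneg (sigmoid_nonneg x) (sub_nonneg.mpr (sigmoid_le_one x)))]
  push_cast
  nlinarith [sq_nonneg (2 * sigmoid x - 1)]

end Real

lemma abs_sq_sub_sq_sub_le {a b y S M : ℝ} (ha : |a| ≤ S) (hb : |b| ≤ S) (hy : |y| ≤ M) :
    |(a - y) ^ 2 - (b - y) ^ 2| ≤ 2 * (S + M) * |a - b| := by
  have hfactor : (a - y) ^ 2 - (b - y) ^ 2 = (a + b - 2 * y) * (a - b) := by ring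
  have hsum : |a + b - 2 * y| ≤ 2 * (S + M) := by
    obtain ⟨ha₁, ha₂⟩ := abs_le.mp ha
    obtain ⟨hb₁, hb₂⟩ := abs_le.mp hb
    obtain ⟨hy₁, hy₂⟩ := abs_le.mp hy
    exact abs_le.mpr ⟨by linarith, by linarith⟩
  rw [hfactor, abs_mul]
  exact mul_le_mul_of_nonneg_right hsum (abs_nonneg _)

section OneHiddenLayer

variable {ι E : Type*} [Fintype ι] [NormedAddCommGroup E] [InnerProductSpace ℝ E]

lemma abs_sum_mul_activation_le {g : ℝ → ℝ} (hg : ∀ x, |g x| ≤ 1)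
    (w0 : ι → ℝ) (w1 : ι → E) (w2 : ι → ℝ) (u : E) :
    |∑ i, w2 i * g (⟪w1 i, u⟫ + w0 i)| ≤ ∑ i, |w2 i| := by
  refine (Finset.abs_sum_le_sum_abs _ _).trans (Finset.sum_le_sum fun i _ => ?_)
  rw [abs_mul]
  exact mul_le_of_le_one_right (abs_nonneg _) (hg _)

lemma abs_sum_mul_activation_sub_le {g : ℝ → ℝ} {K : ℝ≥0} (hg : LipschitzWith K g)
    (w0 : ι → ℝ) (w1 : ι → E) (w2 : ι → ℝ) (u u' : E) :
    |∑ i, w2 i * g (⟪w1 i, u⟫ + w0 i) - ∑ i, w2 i * g (⟪w1 i, u'⟫ + w0 i)|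
      ≤ K * (∑ i, |w2 i| * ‖w1 i‖) * ‖u - u'‖ := by
  have hneuron : ∀ i,
      |g (⟪w1 i, u⟫ + w0 i) - g (⟪w1 i, u'⟫ + w0 i)| ≤ K * (‖w1 i‖ * ‖u - u'‖) :=
    fun i => calc
      _ ≤ K * |(⟪w1 i, u⟫ + w0 i) - (⟪w1 i, u'⟫ + w0 i)| := by
        simpa only [Real.dist_eq] using hg.dist_le_mul _ _
      _ = K * |⟪w1 i, u - u'⟫| := by rw [inner_sub_right, add_sub_add_right_eq_sub]
      _ ≤ K * (‖w1 i‖ * ‖u - u'‖) := by gcongr; exact abs_real_inner_le_norm _ _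
  rw [← Finset.sum_sub_distrib, Finset.mul_sum, Finset.sum_mul]
  refine (Finset.abs_sum_le_sum_abs _ _).trans (Finset.sum_le_sum fun i _ => ?_)
  rw [← mul_sub, abs_mul]
  calc |w2 i| * |g (⟪w1 i, u⟫ + w0 i) - g (⟪w1 i, u'⟫ + w0 i)|
      ≤ |w2 i| * (K * (‖w1 i‖ * ‖u - u'‖)) := by gcongr; exact hneuron i
    _ = K * (|w2 i| * ‖w1 i‖) * ‖u - u'‖ := by ring

end OneHiddenLayer

theorem sigmoid_perceptron_square_loss_lipschitz_general
    {q q₂ : ℕ}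
    (g : ℝ → ℝ) (hg : ∀ x : ℝ, g x = Real.exp x / (1 + Real.exp x))
    (w0 : Fin q₂ → ℝ) (w1 : Fin q₂ → EuclideanSpace ℝ (Fin q)) (w2 : Fin q₂ → ℝ)
    (ψ : EuclideanSpace ℝ (Fin q) → ℝ)
    (hψ : ∀ u, ψ u = ∑ i : Fin q₂, w2 i * g (⟪w1 i, u⟫ + w0 i))
    (ζ : EuclideanSpace ℝ (Fin q) × ℝ → ℝ)
    (hζ : ∀ u y, ζ (u, y) = (ψ u - y) ^ 2)
    (M : ℝ)
    (C : ℝ)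
    (hC : C = 1 / 2 * ((∑ i : Fin q₂, |w2 i|) + M) * ∑ i : Fin q₂, |w2 i| * ‖w1 i‖) :
    ∀ (y : ℝ), |y| ≤ M → ∀ u u' : EuclideanSpace ℝ (Fin q),
      |ζ (u, y) - ζ (u', y)| ≤ C * ‖u - u'‖ := by
  intro y hy u u'
  obtain rfl : g = Real.sigmoid := funext fun x => (hg x).trans (Real.exp_div_one_add_exp x)
  have hψ_le (v) : |ψ v| ≤ ∑ i, |w2 i| :=
    hψ v ▸ abs_sum_mul_activation_le Real.abs_sigmoid_le_one w0 w1 w2 v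
  have hψ_sub : |ψ u - ψ u'| ≤ 4⁻¹ * (∑ i, |w2 i| * ‖w1 i‖) * ‖u - u'‖ := by
    simpa only [hψ, NNReal.coe_inv, NNReal.coe_ofNat] using
      abs_sum_mul_activation_sub_le Real.lipschitzWith_sigmoid w0 w1 w2 u u'
  have hM : 0 ≤ M := (abs_nonneg y).trans hy
  calc |ζ (u, y) - ζ (u', y)|
      ≤ 2 * (∑ i, |w2 i| + M) * |ψ u - ψ u'| := by
        rw [hζ, hζ]; exact abs_sq_sub_sq_sub_le (hψ_le u) (hψ_le u') hy
    _ ≤ 2 * (∑ i, |w2 i| + M) * (4⁻¹ * (∑ i, |w2 i| * ‖w1 i‖) * ‖u - u'‖) := by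
        gcongr
    _ = C * ‖u - u'‖ := by rw [hC]; ring

/-- The square error loss of a one-hidden-layer sigmoid perceptron is
Lipschitz in the input: with `g(x) = eˣ/(1+eˣ)`,
`ψ_w(u) = Σᵢ w⁽²⁾ᵢ g(⟪w⁽¹⁾ᵢ,u⟫ + w⁽⁰⁾ᵢ)` and `ζ((u,y),w) = (ψ_w(u) − y)²`, for `|y| ≤ M`
one has `|ζ((u,y),w) − ζ((u',y),w)| ≤ C(w)‖u − u'‖` with
`C(w) = (1/2)(Σᵢ|w⁽²⁾ᵢ| + M) Σᵢ |w⁽²⁾ᵢ| ‖w⁽¹⁾ᵢ‖`. -/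
theorem sigmoid_perceptron_square_loss_lipschitz
    {q q₂ : ℕ}
    (g : ℝ → ℝ) (hg : ∀ x : ℝ, g x = Real.exp x / (1 + Real.exp x))
    (w0 : Fin q₂ → ℝ) (w1 : Fin q₂ → EuclideanSpace ℝ (Fin q)) (w2 : Fin q₂ → ℝ)
    (ψ : EuclideanSpace ℝ (Fin q) → ℝ)
    (hψ : ∀ u, ψ u = ∑ i : Fin q₂, w2 i * g (⟪w1 i, u⟫ + w0 i))
    (ζ : EuclideanSpace ℝ (Fin q) × ℝ → ℝ)
    (hζ : ∀ u y, ζ (u, y) = (ψ u - y) ^ 2)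
    (M : ℝ) (hM : 0 ≤ M)
    (C : ℝ)
    (hC : C = 1 / 2 * ((∑ i : Fin q₂, |w2 i|) + M) * ∑ i : Fin q₂, |w2 i| * ‖w1 i‖) :
    ∀ (y : ℝ), |y| ≤ M → ∀ u u' : EuclideanSpace ℝ (Fin q),
      |ζ (u, y) - ζ (u', y)| ≤ C * ‖u - u'‖ :=
  sigmoid_perceptron_square_loss_lipschitz_general g hg w0 w1 w2 ψ hψ ζ hζ M C hC
end

section
/- Uniform convergence of the plug-in empirical risk: in the perceptron setting, assume (A7) ζ(z,·) is continuous on W for every z ∈ O; (A8) there is a measurable ζ̃ : O → ℝ with |ζ(z,w)| ≤ ζ̃(z) for all z ∈ O, w ∈ W, and E[ζ̃(Z)] < ∞; (A9) for every w ∈ W there is C(w) > 0 with |ζ((x,y),w) − ζ((x',y),w)| ≤ C(w)‖x − x'‖ for all (x,y),(x',y) ∈ O, and sup_{w∈W} C(w) < ∞; (A10) ζ(·,w) is measurable for every w ∈ W. Assume moreover that the random estimates a_j^N ∈ H satisfy, for each j = 1,…,q, ⟨Γ̂_N(a_j^N − a_j), a_j^N − a_j⟩ →_p 0, where Γ̂_N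 u = (1/N)Σ_{n≤N}⟨u,Xⁿ⟩Xⁿ. Then sup_{w∈W} |(1/N) Σ_{n=1}^N ζ(Z̃_N^n, w) − E[ζ(Z,w)]| → 0 in probability as N → ∞. -/
/-!
Split the plug-in risk at `w` into the empirical risk at the true projections `Z_n` and a
plug-in error. By (A9) the plug-in error is at most `sup C` times the average distance between
estimated and true projections, and by Cauchy–Schwarz the square of that average is at most
`∑ⱼ ⟪Γ̂_N (a_j^N - a_j), a_j^N - a_j⟫`, which tends to `0` in probability.

The empirical risk at `Z_n` obeys a uniform law of large numbers over the compact `W`: by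
continuity in `w` and dominated convergence every `w₀ ∈ W` has a ball on which the mean
oscillation of `ζ` is small; finitely many such balls cover `W`, and on each of them the
deviation is controlled by the strong law applied to `ζ` at the centre and to the oscillation.
-/

open MeasureTheory ProbabilityTheory
open scoped RealInnerProductSpace

open Filter Topology

lemma abs_avg_sub_avg_le {u v c : ℕ → ℝ} {N : ℕ} (h : ∀ n < N, |u n - v n| ≤ c n) :
    |(N : ℝ)⁻¹ * ∑ n ∈ Finset.range N, u n - (N : ℝ)⁻¹ * ∑ n ∈ Finset.range N, v n|
      ≤ (N : ℝ)⁻¹ * ∑ n ∈ Finset.range N, c n := by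
  rw [← mul_sub, ← Finset.sum_sub_distrib, abs_mul, abs_inv, Nat.abs_cast]
  gcongr
  exact (Finset.abs_sum_le_sum_abs _ _).trans
    (Finset.sum_le_sum fun n hn => h n (Finset.mem_range.1 hn))

lemma sq_avg_le_avg_sq (c : ℕ → ℝ) (N : ℕ) :
    ((N : ℝ)⁻¹ * ∑ n ∈ Finset.range N, c n) ^ 2 ≤ (N : ℝ)⁻¹ * ∑ n ∈ Finset.range N, c n ^ 2 := by
  simpa [inv_mul_eq_div] using sum_div_card_sq_le_sum_sq_div_card (s := Finset.range N) (f := c)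

lemma exists_lt_of_lt_sSup_image {Θ : Type*} {W : Set Θ} {g : Θ → ℝ} {ε : ℝ} (hε : 0 ≤ ε)
    (h : ε < sSup (g '' W)) : ∃ w ∈ W, ε < g w := by
  rcases (g '' W).eq_empty_or_nonempty with hempty | hne
  · rw [hempty, Real.sSup_empty] at h
    exact absurd h (not_lt.2 hε)
  · obtain ⟨_, ⟨w, hw, rfl⟩, hlt⟩ := exists_lt_of_lt_csSup hne h
    exact ⟨w, hw, hlt⟩

lemma half_lt_abs_sub_or_half_lt_abs {a b ε : ℝ} (h : ε < |a|) :
    ε / 2 < |a - b| ∨ ε / 2 < |b| := by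
  by_contra! hle
  linarith [abs_sub_abs_le_abs_sub a b]

namespace MeasureTheory

variable {α ι κ E : Type*} [MeasurableSpace α] {μ : Measure α} {l : Filter ι}
  [SeminormedAddCommGroup E]

theorem TendstoInMeasure.add {f f' : ι → α → E} {g g' : α → E}
    (hf : TendstoInMeasure μ f l g) (hf' : TendstoInMeasure μ f' l g') :
    TendstoInMeasure μ (fun i x => f i x + f' i x) l (fun x => g x + g' x) := by
  rw [tendstoInMeasure_iff_norm] at *
  intro ε hε
  have hsub : ∀ i, {x | ε ≤ ‖f i x + f' i x - (g x + g' x)‖}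
      ⊆ {x | ε / 2 ≤ ‖f i x - g x‖} ∪ {x | ε / 2 ≤ ‖f' i x - g' x‖} := by
    intro i x hx
    by_contra h
    simp only [Set.mem_union, Set.mem_ofPred_eq, not_or, not_le] at h hx
    have := norm_add_le (f i x - g x) (f' i x - g' x)
    rw [add_sub_add_comm] at hx
    linarith
  have hsum := (hf _ (half_pos hε)).add (hf' _ (half_pos hε))
  rw [add_zero] at hsum
  exact tendsto_of_tendsto_of_tendsto_of_le_of_le tendsto_const_nhds hsum (fun _ => zero_le)
    fun i => (measure_mono (hsub i)).trans (measure_union_le _ _)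

theorem tendstoInMeasure_finset_sum (s : Finset κ) {f : κ → ι → α → E} {g : κ → α → E}
    (hf : ∀ k ∈ s, TendstoInMeasure μ (f k) l (g k)) :
    TendstoInMeasure μ (fun i x => ∑ k ∈ s, f k i x) l (fun x => ∑ k ∈ s, g k x) := by
  classical
  induction s using Finset.induction_on with
  | empty => intro ε hε; simp [hε.ne', tendsto_const_nhds]
  | insert k s hk ih =>
    simp only [Finset.sum_insert hk]
    exact TendstoInMeasure.add (hf k (Finset.mem_insert_self _ _))
      (ih fun k' hk' => hf k' (Finset.mem_insert_of_mem hk'))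

theorem TendstoInMeasure.tendsto_measure_zero_of_subset {f : ι → α → E}
    (hf : TendstoInMeasure μ f l 0) {ε : ℝ} (hε : 0 < ε) {A : ι → Set α}
    (hA : ∀ i, A i ⊆ {x | ε ≤ ‖f i x‖}) : Tendsto (fun i => μ (A i)) l (𝓝 0) := by
  have h := tendstoInMeasure_iff_norm.1 hf ε hε
  simp only [Pi.zero_apply, sub_zero] at h
  exact tendsto_of_tendsto_of_tendsto_of_le_of_le tendsto_const_nhds h (fun _ => zero_le)
    fun i => measure_mono (hA i)

theorem tendstoInMeasure_zero_of_tendsto_measure_lt {G : ι → α → ℝ} (hG0 : ∀ i x, 0 ≤ G i x)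
    (hG : ∀ ε : ℝ, 0 < ε → Tendsto (fun i => μ {x | ε < G i x}) l (𝓝 0)) :
    TendstoInMeasure μ G l 0 := by
  refine tendstoInMeasure_iff_norm.2 fun ε hε => ?_
  refine tendsto_of_tendsto_of_tendsto_of_le_of_le tendsto_const_nhds (hG _ (half_pos hε))
    (fun _ => zero_le) fun i => measure_mono fun x hx => ?_
  simp only [Set.mem_ofPred_eq, Pi.zero_apply, sub_zero, Real.norm_of_nonneg (hG0 i x)] at hx ⊢
  linarith

end MeasureTheory

section SubtypeValued

variable {Ω γ : Type*} [MeasurableSpace Ω] [MeasurableSpace γ] {P : Measure Ω} {O : Set γ}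

theorem ProbabilityTheory.iIndepFun.subtype_mk (hO : MeasurableSet O) (hne : O.Nonempty)
    {U : ℕ → Ω → γ} (hU : iIndepFun U P) (hmem : ∀ n ω, U n ω ∈ O) :
    iIndepFun (fun n ω => (⟨U n ω, hmem n ω⟩ : O)) P := by
  obtain ⟨ρ, hρ, hρO⟩ := hO.exists_measurable_proj hne
  have hcomp : (fun n ω => (⟨U n ω, hmem n ω⟩ : O)) = fun n => ρ ∘ U n :=
    funext fun n => funext fun ω => (hρO ⟨U n ω, hmem n ω⟩).symm
  rw [hcomp]
  exact hU.comp (fun _ => ρ) fun _ => hρ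

theorem ProbabilityTheory.IdentDistrib.subtype_mk (hO : MeasurableSet O) (hne : O.Nonempty)
    {U V : Ω → γ} (h : IdentDistrib U V P P) (hU : ∀ ω, U ω ∈ O) (hV : ∀ ω, V ω ∈ O) :
    IdentDistrib (fun ω => (⟨U ω, hU ω⟩ : O)) (fun ω => ⟨V ω, hV ω⟩) P P := by
  obtain ⟨ρ, hρ, hρO⟩ := hO.exists_measurable_proj hne
  have hcomp : ∀ (S : Ω → γ) (hS : ∀ ω, S ω ∈ O), (fun ω => (⟨S ω, hS ω⟩ : O)) = ρ ∘ S :=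
    fun S hS => funext fun ω => (hρO ⟨S ω, hS ω⟩).symm
  rw [hcomp U hU, hcomp V hV]
  exact h.comp hρ

end SubtypeValued

section SampleMean

variable {Ω α : Type*} {ξ : ℕ → Ω → α}

noncomputable def sampleMean (ξ : ℕ → Ω → α) (h : α → ℝ) (N : ℕ) (ω : Ω) : ℝ :=
  (N : ℝ)⁻¹ * ∑ n ∈ Finset.range N, h (ξ n ω)

lemma abs_sampleMean_sub_le {h h' c : α → ℝ} (hc : ∀ x, |h x - h' x| ≤ c x) (N : ℕ) (ω : Ω) :
    |sampleMean ξ h N ω - sampleMean ξ h' N ω| ≤ sampleMean ξ c N ω :=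
  abs_avg_sub_avg_le fun n _ => hc (ξ n ω)

variable [MeasurableSpace Ω] [MeasurableSpace α] {P : Measure Ω} {ξ₀ : Ω → α}

theorem ae_tendsto_sampleMean (hindep : iIndepFun ξ P) (hident : ∀ n, IdentDistrib (ξ n) ξ₀ P P)
    {h : α → ℝ} (hh : Measurable h) (hint : Integrable (fun ω => h (ξ₀ ω)) P) :
    ∀ᵐ ω ∂P, Tendsto (fun N => sampleMean ξ h N ω) atTop (𝓝 (∫ ω, h (ξ₀ ω) ∂P)) := by
  have hident' : ∀ n, IdentDistrib (fun ω => h (ξ n ω)) (fun ω => h (ξ₀ ω)) P P :=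
    fun n => (hident n).comp hh
  have hslln := strong_law_ae (fun n ω => h (ξ n ω)) ((hident' 0).integrable_iff.2 hint)
    (fun i j hij => (hindep.indepFun hij).comp hh hh)
    (fun n => (hident' n).trans (hident' 0).symm)
  rw [(hident' 0).integral_eq] at hslln
  simpa only [sampleMean, smul_eq_mul] using hslln

theorem tendstoInMeasure_abs_sampleMean_sub_integral [IsFiniteMeasure P] (hindep : iIndepFun ξ P)
    (hident : ∀ n, IdentDistrib (ξ n) ξ₀ P P) {h : α → ℝ} (hh : Measurable h)
    (hint : Integrable (fun ω => h (ξ₀ ω)) P) :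
    TendstoInMeasure P (fun N ω => |sampleMean ξ h N ω - ∫ ω', h (ξ₀ ω') ∂P|) atTop 0 := by
  refine tendstoInMeasure_of_tendsto_ae (fun N => ?_) ?_
  · unfold sampleMean
    have hmeas : ∀ n, AEMeasurable (fun ω => h (ξ n ω)) P :=
      fun n => hh.comp_aemeasurable (hident n).aemeasurable_fst
    exact (((Finset.aemeasurable_fun_sum _ fun n _ => hmeas n).const_mul _).sub_const _).abs
      |>.aestronglyMeasurable
  · filter_upwards [ae_tendsto_sampleMean hindep hident hh hint] with ω hω
    simpa using (hω.sub_const (∫ ω', h (ξ₀ ω') ∂P)).abs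

end SampleMean

section LocalOscillation

variable {α Θ : Type*} [PseudoMetricSpace Θ] {f : α → Θ → ℝ} {D W : Set Θ} {F : α → ℝ}
  {w₀ : Θ} {r : ℝ}

/-- The supremum runs over a countable dense `D` rather than over a ball of parameters, so that
it is measurable in `x`. -/
noncomputable def localOscillation (f : α → Θ → ℝ) (D : Set Θ) (w₀ : Θ) (r : ℝ) (x : α) : ℝ :=
  ⨆ w : ↥(D ∩ Metric.ball w₀ r), |f x w - f x w₀|

lemma localOscillation_nonneg (x : α) : 0 ≤ localOscillation f D w₀ r x :=
  Real.iSup_nonneg fun _ => abs_nonneg _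

lemma localOscillation_le_two_mul (hD : D ⊆ W) (hdom : ∀ x, ∀ w ∈ W, |f x w| ≤ F x)
    (hw₀ : w₀ ∈ W) (x : α) : localOscillation f D w₀ r x ≤ 2 * F x := by
  have hF : |f x w₀| ≤ F x := hdom x w₀ hw₀
  refine Real.iSup_le (fun w => ?_) (by linarith [abs_nonneg (f x w₀)])
  have := hdom x w (hD w.2.1)
  linarith [abs_sub (f x w) (f x w₀)]

lemma abs_localOscillation_le (hD : D ⊆ W) (hdom : ∀ x, ∀ w ∈ W, |f x w| ≤ F x)
    (hw₀ : w₀ ∈ W) (x : α) : |localOscillation f D w₀ r x| ≤ 2 * F x := by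
  rw [abs_of_nonneg (localOscillation_nonneg x)]
  exact localOscillation_le_two_mul hD hdom hw₀ x

lemma abs_sub_le_localOscillation (hD : D ⊆ W) (hWD : W ⊆ closure D)
    (hdom : ∀ x, ∀ w ∈ W, |f x w| ≤ F x) {x : α} (hcont : ContinuousOn (f x) W) (hw₀ : w₀ ∈ W)
    {w : Θ} (hw : w ∈ W) (hwr : dist w w₀ < r) :
    |f x w - f x w₀| ≤ localOscillation f D w₀ r x := by
  have hbdd : BddAbove (Set.range fun d : ↥(D ∩ Metric.ball w₀ r) => |f x d - f x w₀|) :=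
    ⟨2 * F x, Set.forall_mem_range.2 fun d => by
      linarith [abs_sub (f x d) (f x w₀), hdom x d (hD d.2.1), hdom x w₀ hw₀]⟩
  refine le_of_forall_pos_le_add fun η hη => ?_
  obtain ⟨δ, hδ, hδη⟩ := Metric.continuousWithinAt_iff.1 (hcont w hw) η hη
  obtain ⟨d, hdD, hwd⟩ :=
    Metric.mem_closure_iff.1 (hWD hw) _ (lt_min hδ (sub_pos.2 hwr))
  have hdball : d ∈ Metric.ball w₀ r := by
    rw [Metric.mem_ball]
    linarith [dist_triangle d w w₀, dist_comm w d, min_le_right δ (r - dist w w₀)]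
  have hclose : |f x d - f x w| < η := by
    rw [← Real.dist_eq]
    exact hδη (hD hdD) (by rw [dist_comm]; exact hwd.trans_le (min_le_left _ _))
  have hosc : |f x d - f x w₀| ≤ localOscillation f D w₀ r x :=
    le_ciSup hbdd (⟨d, hdD, hdball⟩ : ↥(D ∩ Metric.ball w₀ r))
  linarith [abs_sub_le (f x w) (f x d) (f x w₀), abs_sub_comm (f x d) (f x w)]

lemma tendsto_localOscillation (hD : D ⊆ W) {x : α} (hcont : ContinuousOn (f x) W)
    (hw₀ : w₀ ∈ W) : Tendsto (fun r => localOscillation f D w₀ r x) (𝓝[>] 0) (𝓝 0) := by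
  refine Metric.tendsto_nhds.2 fun η hη => ?_
  obtain ⟨δ, hδ, hδη⟩ := Metric.continuousWithinAt_iff.1 (hcont w₀ hw₀) (η / 2) (half_pos hη)
  filter_upwards [Ioo_mem_nhdsGT hδ] with r hr
  have hle : localOscillation f D w₀ r x ≤ η / 2 := by
    refine Real.iSup_le (fun d => ?_) (half_pos hη).le
    rw [← Real.dist_eq]
    exact (hδη (hD d.2.1) ((Metric.mem_ball.1 d.2.2).trans hr.2)).le
  rw [Real.dist_0_eq_abs, abs_of_nonneg (localOscillation_nonneg x)]
  linarith

lemma measurable_localOscillation [MeasurableSpace α] (hDc : D.Countable) (hD : D ⊆ W)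
    (hmeas : ∀ w ∈ W, Measurable (f · w)) (hw₀ : w₀ ∈ W) :
    Measurable (localOscillation f D w₀ r) := by
  have : Countable ↥(D ∩ Metric.ball w₀ r) := (hDc.mono Set.inter_subset_left).to_subtype
  exact Measurable.iSup fun w => ((hmeas _ (hD w.2.1)).sub (hmeas _ hw₀)).abs

end LocalOscillation

section UniformLawOfLargeNumbers

variable {Ω α Θ : Type*} [MeasurableSpace Ω] [MeasurableSpace α]
  {P : Measure Ω} {ξ : ℕ → Ω → α} {ξ₀ : Ω → α} {f : α → Θ → ℝ} {D W : Set Θ} {F : α → ℝ}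

lemma integrable_comp_apply (hmeas : ∀ w ∈ W, Measurable (f · w))
    (hdom : ∀ x, ∀ w ∈ W, |f x w| ≤ F x) (hξ₀ : AEMeasurable ξ₀ P)
    (hF : Integrable (fun ω => F (ξ₀ ω)) P) {w : Θ} (hw : w ∈ W) :
    Integrable (fun ω => f (ξ₀ ω) w) P :=
  hF.mono' ((hmeas w hw).comp_aemeasurable hξ₀).aestronglyMeasurable
    (ae_of_all _ fun ω => hdom (ξ₀ ω) w hw)

variable [PseudoMetricSpace Θ]

lemma integrable_comp_localOscillation (hD : D ⊆ W) (hDc : D.Countable)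
    (hmeas : ∀ w ∈ W, Measurable (f · w)) (hdom : ∀ x, ∀ w ∈ W, |f x w| ≤ F x)
    (hξ₀ : AEMeasurable ξ₀ P) (hF : Integrable (fun ω => F (ξ₀ ω)) P) {w₀ : Θ} (hw₀ : w₀ ∈ W)
    (r : ℝ) : Integrable (fun ω => localOscillation f D w₀ r (ξ₀ ω)) P :=
  (hF.const_mul 2).mono'
    ((measurable_localOscillation hDc hD hmeas hw₀).comp_aemeasurable hξ₀).aestronglyMeasurable
    (ae_of_all _ fun ω => abs_localOscillation_le hD hdom hw₀ (ξ₀ ω))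

lemma exists_integral_localOscillation_lt (hD : D ⊆ W) (hDc : D.Countable)
    (hmeas : ∀ w ∈ W, Measurable (f · w)) (hcont : ∀ x, ContinuousOn (f x) W)
    (hdom : ∀ x, ∀ w ∈ W, |f x w| ≤ F x) (hξ₀ : AEMeasurable ξ₀ P)
    (hF : Integrable (fun ω => F (ξ₀ ω)) P) {w₀ : Θ} (hw₀ : w₀ ∈ W) {ε : ℝ} (hε : 0 < ε) :
    ∃ r > 0, ∫ ω, localOscillation f D w₀ r (ξ₀ ω) ∂P < ε := by
  have hlim : Tendsto (fun r => ∫ ω, localOscillation f D w₀ r (ξ₀ ω) ∂P) (𝓝[>] 0) (𝓝 0) := by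
    simpa using tendsto_integral_filter_of_dominated_convergence (fun ω => 2 * F (ξ₀ ω))
      (.of_forall fun r => (integrable_comp_localOscillation hD hDc hmeas hdom hξ₀ hF hw₀ r).1)
      (.of_forall fun r => ae_of_all _ fun ω => abs_localOscillation_le hD hdom hw₀ (ξ₀ ω))
      (hF.const_mul 2) (ae_of_all _ fun ω => tendsto_localOscillation hD (hcont _) hw₀)
  obtain ⟨r, hr, hrpos⟩ := ((hlim.eventually_lt_const hε).and self_mem_nhdsWithin).exists
  exact ⟨r, hrpos, hr⟩

lemma abs_sampleMean_sub_integral_le_of_dist_lt (hD : D ⊆ W) (hWD : W ⊆ closure D)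
    (hDc : D.Countable) (hmeas : ∀ w ∈ W, Measurable (f · w))
    (hcont : ∀ x, ContinuousOn (f x) W) (hdom : ∀ x, ∀ w ∈ W, |f x w| ≤ F x)
    (hξ₀ : AEMeasurable ξ₀ P) (hF : Integrable (fun ω => F (ξ₀ ω)) P) {w k : Θ} (hw : w ∈ W)
    (hk : k ∈ W) {r : ℝ} (hwk : dist w k < r) (N : ℕ) (ω : Ω) :
    |sampleMean ξ (f · w) N ω - ∫ ω', f (ξ₀ ω') w ∂P|
      ≤ |sampleMean ξ (f · k) N ω - ∫ ω', f (ξ₀ ω') k ∂P|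
        + |sampleMean ξ (localOscillation f D k r) N ω
            - ∫ ω', localOscillation f D k r (ξ₀ ω') ∂P|
        + 2 * ∫ ω', localOscillation f D k r (ξ₀ ω') ∂P := by
  have hpt : ∀ x, |f x w - f x k| ≤ localOscillation f D k r x :=
    fun x => abs_sub_le_localOscillation hD hWD hdom (hcont x) hk hw hwk
  have hsample := abs_sampleMean_sub_le (ξ := ξ) hpt N ω
  have hmean : |∫ ω', f (ξ₀ ω') w ∂P - ∫ ω', f (ξ₀ ω') k ∂P|
      ≤ ∫ ω', localOscillation f D k r (ξ₀ ω') ∂P := by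
    rw [← integral_sub (integrable_comp_apply hmeas hdom hξ₀ hF hw)
      (integrable_comp_apply hmeas hdom hξ₀ hF hk)]
    exact abs_integral_le_integral_abs.trans <| integral_mono_of_nonneg
      (ae_of_all _ fun _ => abs_nonneg _)
      (integrable_comp_localOscillation hD hDc hmeas hdom hξ₀ hF hk r)
      (ae_of_all _ fun ω' => hpt (ξ₀ ω'))
  set e := ∫ ω', localOscillation f D k r (ξ₀ ω') ∂P
  linarith [abs_sub_le (sampleMean ξ (f · w) N ω) (sampleMean ξ (f · k) N ω)
      (∫ ω', f (ξ₀ ω') w ∂P),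
    abs_sub_le (sampleMean ξ (f · k) N ω) (∫ ω', f (ξ₀ ω') k ∂P) (∫ ω', f (ξ₀ ω') w ∂P),
    abs_sub_comm (∫ ω', f (ξ₀ ω') k ∂P) (∫ ω', f (ξ₀ ω') w ∂P),
    le_abs_self (sampleMean ξ (localOscillation f D k r) N ω - e)]

theorem tendsto_measure_exists_abs_sampleMean_sub_integral_gt [IsFiniteMeasure P]
    (hindep : iIndepFun ξ P) (hident : ∀ n, IdentDistrib (ξ n) ξ₀ P P) (hW : IsCompact W)
    (hmeas : ∀ w ∈ W, Measurable (f · w)) (hcont : ∀ x, ContinuousOn (f x) W)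
    (hdom : ∀ x, ∀ w ∈ W, |f x w| ≤ F x) (hF : Integrable (fun ω => F (ξ₀ ω)) P)
    {δ : ℝ} (hδ : 0 < δ) :
    Tendsto (fun N => P {ω | ∃ w ∈ W, δ < |sampleMean ξ (f · w) N ω - ∫ ω', f (ξ₀ ω') w ∂P|})
      atTop (𝓝 0) := by
  obtain ⟨D, hD, hDc, hWD⟩ := hW.isSeparable.exists_countable_dense_subset
  have hξ₀ : AEMeasurable ξ₀ P := (hident 0).aemeasurable_snd
  have hradius : ∀ w₀ ∈ W, ∃ r > 0, ∫ ω, localOscillation f D w₀ r (ξ₀ ω) ∂P < δ / 4 :=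
    fun w₀ hw₀ => exists_integral_localOscillation_lt hD hDc hmeas hcont hdom hξ₀ hF hw₀
      (by positivity)
  choose! r hr hrδ using hradius
  obtain ⟨t, htW, hWt⟩ := hW.elim_nhds_subcover (fun k => Metric.ball k (r k))
    fun k hk => Metric.ball_mem_nhds k (hr k hk)
  let dev : (α → ℝ) → ℕ → Ω → ℝ := fun h N ω => |sampleMean ξ h N ω - ∫ ω', h (ξ₀ ω') ∂P|
  let V : ℕ → Ω → ℝ := fun N ω =>
    ∑ k ∈ t, (dev (f · k) N ω + dev (localOscillation f D k (r k)) N ω)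
  have hV : TendstoInMeasure P V atTop 0 := by
    have h := tendstoInMeasure_finset_sum t fun k hk => TendstoInMeasure.add
      (tendstoInMeasure_abs_sampleMean_sub_integral hindep hident (hmeas k (htW k hk))
        (integrable_comp_apply hmeas hdom hξ₀ hF (htW k hk)))
      (tendstoInMeasure_abs_sampleMean_sub_integral hindep hident
        (measurable_localOscillation hDc hD hmeas (htW k hk))
        (integrable_comp_localOscillation hD hDc hmeas hdom hξ₀ hF (htW k hk) (r k)))
    simp only [Pi.zero_apply, add_zero, Finset.sum_const_zero] at h
    exact h
  refine hV.tendsto_measure_zero_of_subset (half_pos hδ) fun N ω ⟨w, hw, hδw⟩ => ?_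
  obtain ⟨k, hk, hwk⟩ := Set.mem_iUnion₂.1 (hWt hw)
  have hbracket := abs_sampleMean_sub_integral_le_of_dist_lt (ξ := ξ) hD hWD hDc hmeas hcont hdom
    hξ₀ hF hw (htW k hk) (Metric.mem_ball.1 hwk) N ω
  have hsingle : dev (f · k) N ω + dev (localOscillation f D k (r k)) N ω ≤ V N ω :=
    Finset.single_le_sum (f := fun k => dev (f · k) N ω + dev (localOscillation f D k (r k)) N ω)
      (fun k _ => by positivity) hk
  have hsmall := hrδ k (htW k hk)
  show δ / 2 ≤ ‖V N ω‖
  linarith [le_abs_self (V N ω), Real.norm_eq_abs (V N ω)]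

end UniformLawOfLargeNumbers

theorem tendsto_measure_lt_sSup_abs_of_sq_abs_sub_le {Ω Θ : Type*} [MeasurableSpace Ω]
    {P : Measure Ω} {W : Set Θ} {A B : ℕ → Ω → Θ → ℝ} {G : ℕ → Ω → ℝ} {K : ℝ} (hK : 0 < K)
    (hB : ∀ δ : ℝ, 0 < δ → Tendsto (fun N => P {ω | ∃ w ∈ W, δ < |B N ω w|}) atTop (𝓝 0))
    (hG : TendstoInMeasure P G atTop 0)
    (hAB : ∀ N ω, ∀ w ∈ W, |A N ω w - B N ω w| ^ 2 ≤ K * G N ω) {ε : ℝ} (hε : 0 < ε) :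
    Tendsto (fun N => P {ω | ε < sSup ((fun w => |A N ω w|) '' W)}) atTop (𝓝 0) := by
  have hc : 0 < (ε / 2) ^ 2 / K := by positivity
  refine tendsto_of_tendsto_of_tendsto_of_le_of_le tendsto_const_nhds
    (by simpa only [add_zero] using
      (hB _ (half_pos hε)).add (hG.tendsto_measure_zero_of_subset hc fun _ => subset_rfl))
    (fun _ => zero_le) fun N => (measure_mono fun ω hω => ?_).trans (measure_union_le _ _)
  obtain ⟨w, hw, hlt⟩ := exists_lt_of_lt_sSup_image hε.le hω
  rcases half_lt_abs_sub_or_half_lt_abs (b := B N ω w) hlt with hAB' | hB'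
  · right
    have hsq := (pow_lt_pow_left₀ hAB' (by positivity) two_ne_zero).trans_le (hAB N ω w hw)
    show _ ≤ ‖G N ω‖
    rw [Real.norm_eq_abs]
    exact ((div_le_iff₀' hK).2 hsq.le).trans (le_abs_self _)
  · left
    exact ⟨w, hw, hB'⟩

section PlugIn

variable {H : Type*} [NormedAddCommGroup H] [InnerProductSpace ℝ H] {q : ℕ}

def projCoords (a : Fin q → H) (x : H) : EuclideanSpace ℝ (Fin q) :=
  WithLp.toLp 2 fun j => ⟪x, a j⟫

lemma continuous_projCoords (a : Fin q → H) : Continuous (projCoords a) :=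
  (PiLp.continuous_toLp 2 _).comp (continuous_pi fun _ => continuous_id.inner continuous_const)

lemma norm_projCoords_sub_sq (b a : Fin q → H) (x : H) :
    ‖projCoords b x - projCoords a x‖ ^ 2 = ∑ j, ⟪x, b j - a j⟫ ^ 2 := by
  rw [EuclideanSpace.norm_eq, Real.sq_sqrt (by positivity)]
  simp [projCoords, inner_sub_right]

lemma inner_smul_sum_inner_smul_self (X : ℕ → H) (N : ℕ) (u : H) :
    ⟪(N : ℝ)⁻¹ • ∑ n ∈ Finset.range N, ⟪u, X n⟫ • X n, u⟫
      = (N : ℝ)⁻¹ * ∑ n ∈ Finset.range N, ⟪X n, u⟫ ^ 2 := by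
  rw [real_inner_smul_left, sum_inner]
  congr 1
  refine Finset.sum_congr rfl fun n _ => ?_
  rw [real_inner_smul_left, real_inner_comm, sq]

lemma sq_abs_avg_sub_avg_le_sum_inner {N : ℕ} (X : ℕ → H) (b a : Fin q → H)
    {ψ : ℕ → EuclideanSpace ℝ (Fin q) → ℝ} {M : ℝ}
    (hψ : ∀ n < N, |ψ n (projCoords b (X n)) - ψ n (projCoords a (X n))|
      ≤ M * ‖projCoords b (X n) - projCoords a (X n)‖) :
    |(N : ℝ)⁻¹ * ∑ n ∈ Finset.range N, ψ n (projCoords b (X n))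
        - (N : ℝ)⁻¹ * ∑ n ∈ Finset.range N, ψ n (projCoords a (X n))| ^ 2
      ≤ M ^ 2 * ∑ j, ⟪(N : ℝ)⁻¹ • ∑ n ∈ Finset.range N, ⟪b j - a j, X n⟫ • X n, b j - a j⟫ := by
  set d : ℕ → ℝ := fun n => ‖projCoords b (X n) - projCoords a (X n)‖
  calc _ ≤ ((N : ℝ)⁻¹ * ∑ n ∈ Finset.range N, M * d n) ^ 2 :=
        pow_le_pow_left₀ (abs_nonneg _) (abs_avg_sub_avg_le hψ) 2
    _ = M ^ 2 * ((N : ℝ)⁻¹ * ∑ n ∈ Finset.range N, d n) ^ 2 := by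
        rw [← Finset.mul_sum]; ring
    _ ≤ M ^ 2 * ((N : ℝ)⁻¹ * ∑ n ∈ Finset.range N, d n ^ 2) := by
        gcongr; exact sq_avg_le_avg_sq d N
    _ = _ := by
        simp_rw [d, norm_projCoords_sub_sq, inner_smul_sum_inner_smul_self]
        rw [Finset.sum_comm, Finset.mul_sum]

end PlugIn

theorem plugin_empirical_risk_uniform_convergence_general
    {Ω : Type*} [MeasurableSpace Ω] (P : Measure Ω) [IsProbabilityMeasure P]
    {H : Type*} [NormedAddCommGroup H] [InnerProductSpace ℝ H]
    [MeasurableSpace H] [BorelSpace H]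
    {q q₂ : ℕ}
    -- the pair (X, Y) and its i.i.d. copies
    (X : Ω → H) (hXmeas : Measurable X)
    (Y : Ω → ℝ) (hYmeas : Measurable Y)
    (Xn : ℕ → Ω → H) (Yn : ℕ → Ω → ℝ)
    (hXnmeas : ∀ n, Measurable (Xn n)) (hYnmeas : ∀ n, Measurable (Yn n))
    (hiid : iIndepFun
      (fun n ω => (Xn n ω, Yn n ω)) P)
    (hident : ∀ n, Measure.map (fun ω => (Xn n ω, Yn n ω)) P
      = Measure.map (fun ω => (X ω, Y ω)) P)
    -- the (fixed) EDR directions and their random estimates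
    (a : Fin q → H)
    (aN : ℕ → Fin q → Ω → H)
    -- the empirical second-moment operator Γ̂_N
    (ΓhatN : ℕ → Ω → H → H)
    (hΓhatN : ∀ (N : ℕ) (ω : Ω) (u : H),
      ΓhatN N ω u = (N : ℝ)⁻¹ • ∑ n ∈ Finset.range N, ⟪u, Xn n ω⟫ • Xn n ω)
    -- consistency of the estimated projections
    (haNcons : ∀ j : Fin q, ∀ ε : ℝ, 0 < ε →
      Filter.Tendsto
        (fun N : ℕ => P {ω | ε < ⟪ΓhatN N ω (aN N j ω - a j), aN N j ω - a j⟫})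
        Filter.atTop (nhds 0))
    -- the open set O, the compact set of weights W
    (O : Set (EuclideanSpace ℝ (Fin q) × ℝ)) (hO : IsOpen O)
    (W : Set (PerceptronWeights q q₂)) (hWcpt : IsCompact W)
    -- activation, loss and the induced criterion ζ
    (ζ : EuclideanSpace ℝ (Fin q) × ℝ → PerceptronWeights q q₂ → ℝ)
    -- Z, Z_n and the plug-in Z̃_N^n, all with values in O
    (Z : Ω → EuclideanSpace ℝ (Fin q) × ℝ)
    (hZ : ∀ ω, Z ω = ((WithLp.toLp 2 (fun j => ⟪X ω, a j⟫) : EuclideanSpace ℝ (Fin q)), Y ω))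
    (hZO : ∀ ω, Z ω ∈ O)
    (hZnO : ∀ (n : ℕ) (ω : Ω),
      ((WithLp.toLp 2 (fun j => ⟪Xn n ω, a j⟫) : EuclideanSpace ℝ (Fin q)), Yn n ω) ∈ O)
    (Ztilde : ℕ → ℕ → Ω → EuclideanSpace ℝ (Fin q) × ℝ)
    (hZtilde : ∀ (N n : ℕ) (ω : Ω),
      Ztilde N n ω = ((WithLp.toLp 2 (fun j => ⟪Xn n ω, aN N j ω⟫) : EuclideanSpace ℝ (Fin q)), Yn n ω))
    (hZtildeO : ∀ (N n : ℕ) (ω : Ω), Ztilde N n ω ∈ O)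
    -- (A7): continuity in the weights
    (hA7 : ∀ z ∈ O, ContinuousOn (ζ z) W)
    -- (A8): domination by an integrable function
    (ζtilde : EuclideanSpace ℝ (Fin q) × ℝ → ℝ)
    (hdom : ∀ z ∈ O, ∀ w ∈ W, |ζ z w| ≤ ζtilde z)
    (hint : Integrable (fun ω => ζtilde (Z ω)) P)
    -- (A9): Lipschitz continuity in the first argument, uniformly over W
    (C : PerceptronWeights q q₂ → ℝ)
    (hA9 : ∀ w ∈ W, ∀ (x x' : EuclideanSpace ℝ (Fin q)) (y : ℝ),
      (x, y) ∈ O → (x', y) ∈ O → |ζ (x, y) w - ζ (x', y) w| ≤ C w * ‖x - x'‖)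
    (hCbdd : ∃ M : ℝ, ∀ w ∈ W, C w ≤ M)
    -- (A10): measurability in the first argument
    (hA10 : ∀ w ∈ W, Measurable fun z : O => ζ (z : EuclideanSpace ℝ (Fin q) × ℝ) w) :
    ∀ ε : ℝ, 0 < ε →
      Filter.Tendsto
        (fun N : ℕ => P {ω | ε < sSup ((fun w =>
          |(N : ℝ)⁻¹ * ∑ n ∈ Finset.range N, ζ (Ztilde N n ω) w
            - ∫ ω', ζ (Z ω') w ∂P|) '' W)})
        Filter.atTop (nhds 0) := by
  intro ε hε
  obtain ⟨M₀, hM₀⟩ := hCbdd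
  obtain ⟨ω₀⟩ := nonempty_of_isProbabilityMeasure P
  -- (A7), (A8) and (A10) only hold on `O`, so the law of large numbers is run on `O`-valued
  -- samples.
  have hφ : Measurable fun p : H × ℝ => (projCoords a p.1, p.2) :=
    ((continuous_projCoords a).measurable.comp measurable_fst).prodMk measurable_snd
  have hOne : O.Nonempty := ⟨Z ω₀, hZO ω₀⟩
  have hξindep := (hiid.comp (fun _ p => (projCoords a p.1, p.2)) fun _ => hφ).subtype_mk
    hO.measurableSet hOne hZnO
  have hξident : ∀ n, IdentDistrib (fun ω => (⟨(projCoords a (Xn n ω), Yn n ω), hZnO n ω⟩ : O))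
      (fun ω => ⟨Z ω, hZO ω⟩) P P := by
    intro n
    refine IdentDistrib.subtype_mk hO.measurableSet hOne ?_ (hZnO n) hZO
    rw [show Z = _ from funext hZ]
    exact IdentDistrib.comp ⟨((hXnmeas n).prodMk (hYnmeas n)).aemeasurable,
      (hXmeas.prodMk hYmeas).aemeasurable, hident n⟩ hφ
  set G : ℕ → Ω → ℝ := fun N ω => ∑ j, ⟪ΓhatN N ω (aN N j ω - a j), aN N j ω - a j⟫
  have hG : TendstoInMeasure P G atTop 0 := by
    have h := tendstoInMeasure_finset_sum Finset.univ fun j _ =>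
      tendstoInMeasure_zero_of_tendsto_measure_lt (fun N ω => by
        rw [hΓhatN, inner_smul_sum_inner_smul_self]; positivity) (haNcons j)
    simp only [Pi.zero_apply, Finset.sum_const_zero] at h
    exact h
  set M := max M₀ 1
  have hplug : ∀ (N : ℕ) ω, ∀ w ∈ W,
      |(N : ℝ)⁻¹ * ∑ n ∈ Finset.range N, ζ (Ztilde N n ω) w
        - (N : ℝ)⁻¹ * ∑ n ∈ Finset.range N, ζ (projCoords a (Xn n ω), Yn n ω) w| ^ 2
        ≤ M ^ 2 * G N ω := by
    intro N ω w hw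
    simp_rw [hZtilde, G, hΓhatN]
    refine sq_abs_avg_sub_avg_le_sum_inner (Xn · ω) (aN N · ω) a
      (ψ := fun n x => ζ (x, Yn n ω) w) fun n _ => ?_
    exact (hA9 w hw _ _ _ (hZtilde N n ω ▸ hZtildeO N n ω) (hZnO n ω)).trans
      (mul_le_mul_of_nonneg_right ((hM₀ w hw).trans (le_max_left _ _)) (norm_nonneg _))
  exact tendsto_measure_lt_sSup_abs_of_sq_abs_sub_le (K := M ^ 2) (by positivity)
    (fun δ hδ => tendsto_measure_exists_abs_sampleMean_sub_integral_gt hξindep hξident hWcpt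
      (f := fun (z : O) w => ζ z w) hA10 (fun z => hA7 z z.2)
      (fun z w hw => hdom z z.2 w hw) hint hδ)
    hG (fun N ω w hw => by rw [sub_sub_sub_cancel_right]; exact hplug N ω w hw) hε

/-- Uniform convergence in probability of the plug-in empirical risk:
in the perceptron setting, under (A7)–(A10) and consistency of the projections
`⟪Γ̂_N(a_j^N − a_j), a_j^N − a_j⟫ →_p 0`, one has
`sup_{w∈W} |(1/N) Σ_n ζ(Z̃_N^n, w) − E[ζ(Z,w)]| →_p 0`. -/
theorem plugin_empirical_risk_uniform_convergence
    {Ω : Type*} [MeasurableSpace Ω] (P : Measure Ω) [IsProbabilityMeasure P]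
    {H : Type*} [NormedAddCommGroup H] [InnerProductSpace ℝ H] [CompleteSpace H]
    [SecondCountableTopology H] [MeasurableSpace H] [BorelSpace H]
    {q q₂ : ℕ}
    -- the pair (X, Y) and its i.i.d. copies
    (X : Ω → H) (hXmeas : Measurable X) (hXcentered : ∫ ω, X ω ∂P = 0)
    (hX4 : Integrable (fun ω => ‖X ω‖ ^ 4) P)
    (Y : Ω → ℝ) (hYmeas : Measurable Y)
    (Xn : ℕ → Ω → H) (Yn : ℕ → Ω → ℝ)
    (hXnmeas : ∀ n, Measurable (Xn n)) (hYnmeas : ∀ n, Measurable (Yn n))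
    (hiid : iIndepFun
      (fun n ω => (Xn n ω, Yn n ω)) P)
    (hident : ∀ n, Measure.map (fun ω => (Xn n ω, Yn n ω)) P
      = Measure.map (fun ω => (X ω, Y ω)) P)
    -- the (fixed) EDR directions and their random estimates
    (a : Fin q → H)
    (aN : ℕ → Fin q → Ω → H) (haNmeas : ∀ N j, Measurable (aN N j))
    -- the empirical second-moment operator Γ̂_N
    (ΓhatN : ℕ → Ω → H → H)
    (hΓhatN : ∀ (N : ℕ) (ω : Ω) (u : H),
      ΓhatN N ω u = (N : ℝ)⁻¹ • ∑ n ∈ Finset.range N, ⟪u, Xn n ω⟫ • Xn n ω)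
    -- consistency of the estimated projections
    (haNcons : ∀ j : Fin q, ∀ ε : ℝ, 0 < ε →
      Filter.Tendsto
        (fun N : ℕ => P {ω | ε < ⟪ΓhatN N ω (aN N j ω - a j), aN N j ω - a j⟫})
        Filter.atTop (nhds 0))
    -- the open set O, the compact set of weights W
    (O : Set (EuclideanSpace ℝ (Fin q) × ℝ)) (hO : IsOpen O)
    (W : Set (PerceptronWeights q q₂)) (hWne : W.Nonempty) (hWcpt : IsCompact W)
    -- activation, loss and the induced criterion ζ
    (g : ℝ → ℝ) (L : ℝ → ℝ → ℝ)
    (ζ : EuclideanSpace ℝ (Fin q) × ℝ → PerceptronWeights q q₂ → ℝ)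
    (hζ : ∀ (z : EuclideanSpace ℝ (Fin q) × ℝ) (w : PerceptronWeights q q₂),
      ζ z w = L (∑ i : Fin q₂, w.1 i * g ((∑ j : Fin q, w.2.1 i j * z.1 j) + w.2.2 i)) z.2)
    -- Z, Z_n and the plug-in Z̃_N^n, all with values in O
    (Z : Ω → EuclideanSpace ℝ (Fin q) × ℝ)
    (hZ : ∀ ω, Z ω = ((WithLp.toLp 2 (fun j => ⟪X ω, a j⟫) : EuclideanSpace ℝ (Fin q)), Y ω))
    (hZO : ∀ ω, Z ω ∈ O)
    (hZnO : ∀ (n : ℕ) (ω : Ω),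
      ((WithLp.toLp 2 (fun j => ⟪Xn n ω, a j⟫) : EuclideanSpace ℝ (Fin q)), Yn n ω) ∈ O)
    (Ztilde : ℕ → ℕ → Ω → EuclideanSpace ℝ (Fin q) × ℝ)
    (hZtilde : ∀ (N n : ℕ) (ω : Ω),
      Ztilde N n ω = ((WithLp.toLp 2 (fun j => ⟪Xn n ω, aN N j ω⟫) : EuclideanSpace ℝ (Fin q)), Yn n ω))
    (hZtildeO : ∀ (N n : ℕ) (ω : Ω), Ztilde N n ω ∈ O)
    -- (A7): continuity in the weights
    (hA7 : ∀ z ∈ O, ContinuousOn (ζ z) W)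
    -- (A8): domination by an integrable function
    (ζtilde : EuclideanSpace ℝ (Fin q) × ℝ → ℝ)
    (hζtmeas : Measurable fun z : O => ζtilde (z : EuclideanSpace ℝ (Fin q) × ℝ))
    (hdom : ∀ z ∈ O, ∀ w ∈ W, |ζ z w| ≤ ζtilde z)
    (hint : Integrable (fun ω => ζtilde (Z ω)) P)
    -- (A9): Lipschitz continuity in the first argument, uniformly over W
    (C : PerceptronWeights q q₂ → ℝ) (hCpos : ∀ w ∈ W, 0 < C w)
    (hA9 : ∀ w ∈ W, ∀ (x x' : EuclideanSpace ℝ (Fin q)) (y : ℝ),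
      (x, y) ∈ O → (x', y) ∈ O → |ζ (x, y) w - ζ (x', y) w| ≤ C w * ‖x - x'‖)
    (hCbdd : ∃ M : ℝ, ∀ w ∈ W, C w ≤ M)
    -- (A10): measurability in the first argument
    (hA10 : ∀ w ∈ W, Measurable fun z : O => ζ (z : EuclideanSpace ℝ (Fin q) × ℝ) w) :
    ∀ ε : ℝ, 0 < ε →
      Filter.Tendsto
        (fun N : ℕ => P {ω | ε < sSup ((fun w =>
          |(N : ℝ)⁻¹ * ∑ n ∈ Finset.range N, ζ (Ztilde N n ω) w
            - ∫ ω', ζ (Z ω') w ∂P|) '' W)})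
        Filter.atTop (nhds 0) :=
  plugin_empirical_risk_uniform_convergence_general P X hXmeas Y hYmeas Xn Yn hXnmeas hYnmeas hiid
    hident a aN ΓhatN hΓhatN haNcons O hO W hWcpt ζ Z hZ hZO hZnO Ztilde hZtilde hZtildeO hA7 ζtilde
    hdom hint C hA9 hCbdd hA10
end

section
/- Uniform strong law of large numbers over a compact parameter set: let (Z_n)_{n≥1} be i.i.d. random elements of a measurable set O ⊆ ℝ^m, W a nonempty compact subset of ℝ^p, and ζ : O × W → ℝ a function such that ζ(z,·) is continuous on W for every z ∈ O, ζ(·,w) is measurable for every w ∈ W, and there is a measurable ζ̃ : O → ℝ with |ζ(z,w)| ≤ ζ̃(z) for all z,w and E[ζ̃(Z₁)] < ∞. Then sup_{w∈W} |(1/N) Σ_{n=1}^N ζ(Z_n, w) − E[ζ(Z₁,w)]| → 0 almost surely as N → ∞. -/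
/-!
The functions `ζ(Z_n, ·)` are i.i.d. random elements of the separable Banach space `C(W, ℝ)`,
integrable because `‖ζ(z, ·)‖ ≤ ζ̃(z)`, and the sup-norm there is exactly the supremum over `W`.
Etemadi's strong law in Banach spaces therefore gives the uniform statement at once. Measurability
of `z ↦ ζ(z, ·)` as a `C(W, ℝ)`-valued map follows from that of the evaluations, since a closed
ball of `C(W, ℝ)` is cut out by countably many evaluations at a dense subset of `W`.
-/

open MeasureTheory ProbabilityTheory Topology Set Filter

theorem measurable_of_measurable_dist {α β : Type*} [MeasurableSpace α] [PseudoMetricSpace β]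
    [SecondCountableTopology β] [MeasurableSpace β] [BorelSpace β] {g : α → β}
    (hg : ∀ c, Measurable fun a => dist (g a) c) : Measurable g := by
  refine measurable_of_isOpen fun U hU => ?_
  choose! ε hε hεU using Metric.isOpen_iff.1 hU
  obtain ⟨T, -, hTc, hT⟩ :=
    TopologicalSpace.isOpen_biUnion_countable U (fun c => Metric.ball c (ε c))
      fun _ _ => Metric.isOpen_ball
  have hU_eq : U = ⋃ c ∈ T, Metric.ball c (ε c) := by
    rw [hT]
    exact Subset.antisymm (fun c hc => mem_biUnion hc (Metric.mem_ball_self (hε c hc)))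
      (iUnion₂_subset hεU)
  rw [hU_eq, preimage_iUnion₂]
  exact .biUnion hTc fun c _ => measurableSet_lt (hg c) measurable_const

namespace ContinuousMap

variable {K E : Type*} [TopologicalSpace K] [CompactSpace K] [PseudoMetricSpace E]

theorem dist_le_iff_of_dense [Nonempty K] {D : Set K} (hD : Dense D) {f g : C(K, E)} {r : ℝ} :
    dist f g ≤ r ↔ ∀ x ∈ D, dist (f x) (g x) ≤ r := by
  rw [dist_le_iff_of_nonempty]
  refine ⟨fun h x _ => h x, fun h x => ?_⟩
  have hclosed : IsClosed {y | dist (f y) (g y) ≤ r} := isClosed_le (by fun_prop) continuous_const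
  exact hclosed.closure_subset_iff.2 h (hD.closure_eq ▸ mem_univ x)

variable [T2Space K] [SecondCountableTopology K] [SecondCountableTopology E] [MeasurableSpace E]
  [OpensMeasurableSpace E] [MeasurableSpace C(K, E)] [BorelSpace C(K, E)]

theorem measurable_of_measurable_apply {α : Type*} [MeasurableSpace α] {g : α → C(K, E)}
    (hg : ∀ x, Measurable fun a => g a x) : Measurable g := by
  rcases isEmpty_or_nonempty K with _ | _
  · exact measurable_of_subsingleton_codomain g
  obtain ⟨D, hDc, hD⟩ := TopologicalSpace.exists_countable_dense K
  refine measurable_of_measurable_dist fun c => measurable_of_Iic fun r => ?_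
  have hpre : (fun a => dist (g a) c) ⁻¹' Iic r = ⋂ x ∈ D, {a | dist (g a x) (c x) ≤ r} := by
    ext a
    simp only [mem_preimage, mem_Iic, mem_iInter, mem_ofPred_eq, dist_le_iff_of_dense hD]
  rw [hpre]
  exact .biInter hDc fun x _ => measurableSet_le ((hg x).dist measurable_const) measurable_const

end ContinuousMap

theorem ProbabilityTheory.IndepFun.codRestrict {Ω β γ : Type*} [MeasurableSpace Ω]
    [MeasurableSpace β] [MeasurableSpace γ] {μ : Measure Ω} {f : Ω → β} {g : Ω → γ}
    {s : Set β} {t : Set γ} (h : IndepFun f g μ) (hfs : ∀ ω, f ω ∈ s) (hgt : ∀ ω, g ω ∈ t) :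
    IndepFun (codRestrict f s hfs) (codRestrict g t hgt) μ := by
  rw [IndepFun_iff_Indep] at h ⊢
  simp only [Subtype.instMeasurableSpace, MeasurableSpace.comap_comp]
  exact h

theorem ProbabilityTheory.IdentDistrib.codRestrict {Ω Ω' β : Type*} [MeasurableSpace Ω]
    [MeasurableSpace Ω'] [MeasurableSpace β] {μ : Measure Ω} {ν : Measure Ω'}
    {f : Ω → β} {g : Ω' → β} {s : Set β} (h : IdentDistrib f g μ ν)
    (hfs : ∀ ω, f ω ∈ s) (hgs : ∀ ω, g ω ∈ s) :
    IdentDistrib (codRestrict f s hfs) (codRestrict g s hgs) μ ν where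
  aemeasurable_fst := h.aemeasurable_fst.subtype_mk
  aemeasurable_snd := h.aemeasurable_snd.subtype_mk
  map_eq := by
    ext t ht
    rw [Measure.map_apply_of_aemeasurable h.aemeasurable_fst.subtype_mk ht,
      Measure.map_apply_of_aemeasurable h.aemeasurable_snd.subtype_mk ht]
    obtain ⟨u, hu, rfl⟩ := ht
    exact h.measure_mem_eq hu

theorem ProbabilityTheory.strong_law_ae_uniform {Ω S K : Type*} [MeasurableSpace Ω]
    [MeasurableSpace S] [TopologicalSpace K] [CompactSpace K] [T2Space K]
    [SecondCountableTopology K] {P : Measure Ω} (Z : ℕ → Ω → S)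
    (hindep : Pairwise fun i j => IndepFun (Z i) (Z j) P)
    (hident : ∀ n, IdentDistrib (Z n) (Z 0) P P)
    (f : S → C(K, ℝ)) (hf : ∀ x, Measurable fun z => f z x)
    (b : S → ℝ) (hdom : ∀ z x, |f z x| ≤ b z) (hb : Integrable (fun ω => b (Z 0 ω)) P) :
    ∀ᵐ ω ∂P, Tendsto (fun N : ℕ => ⨆ x, |(N : ℝ)⁻¹ * ∑ n ∈ Finset.range N, f (Z n ω) x
      - ∫ ω', f (Z 0 ω') x ∂P|) atTop (𝓝 0) := by
  borelize C(K, ℝ)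
  have hfm : Measurable f := ContinuousMap.measurable_of_measurable_apply hf
  have hnorm : ∀ z, ‖f z‖ ≤ ‖b z‖ := fun z =>
    (ContinuousMap.norm_le _ (norm_nonneg _)).2 fun x => (hdom z x).trans (le_abs_self _)
  have hint : Integrable (fun ω => f (Z 0 ω)) P :=
    hb.mono (hfm.comp_aemeasurable (hident 0).aemeasurable_fst).aestronglyMeasurable
      (.of_forall fun ω => hnorm _)
  filter_upwards [strong_law_ae (fun n ω => f (Z n ω)) hint
    (fun i j hij => (hindep hij).comp hfm hfm) (fun n => (hident n).comp hfm)] with ω hω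
  convert tendsto_iff_norm_sub_tendsto_zero.1 hω using 2 with N
  simp [ContinuousMap.norm_eq_iSup_norm, ContinuousMap.integral_apply hint]

theorem uniform_strong_law_of_large_numbers_general
    {Ω : Type*} [MeasurableSpace Ω] (P : Measure Ω)
    {m p : ℕ}
    (O : Set (EuclideanSpace ℝ (Fin m)))
    (W : Set (EuclideanSpace ℝ (Fin p))) (hWcpt : IsCompact W)
    (Z : ℕ → Ω → EuclideanSpace ℝ (Fin m))
    (hZmeas : ∀ n, Measurable (Z n))
    (hZO : ∀ n ω, Z n ω ∈ O)
    (hindep : iIndepFun Z P)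
    (hident : ∀ n, Measure.map (Z n) P = Measure.map (Z 0) P)
    (ζ : EuclideanSpace ℝ (Fin m) → EuclideanSpace ℝ (Fin p) → ℝ)
    (hζcont : ∀ z ∈ O, ContinuousOn (ζ z) W)
    (hζmeas : ∀ w ∈ W, Measurable fun z : O => ζ (z : EuclideanSpace ℝ (Fin m)) w)
    (ζtilde : EuclideanSpace ℝ (Fin m) → ℝ)
    (hdom : ∀ z ∈ O, ∀ w ∈ W, |ζ z w| ≤ ζtilde z)
    (hint : Integrable (fun ω => ζtilde (Z 0 ω)) P) :
    ∀ᵐ ω ∂P,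
      Filter.Tendsto
        (fun N : ℕ => sSup ((fun w =>
          |(N : ℝ)⁻¹ * ∑ n ∈ Finset.range N, ζ (Z n ω) w - ∫ ω', ζ (Z 0 ω') w ∂P|) '' W))
        Filter.atTop (nhds 0) := by
  have : CompactSpace W := isCompact_iff_compactSpace.mp hWcpt
  have hident' n : IdentDistrib (Z n) (Z 0) P P :=
    ⟨(hZmeas n).aemeasurable, (hZmeas 0).aemeasurable, hident n⟩
  filter_upwards [strong_law_ae_uniform (fun n => codRestrict (Z n) O (hZO n))
    (fun i j hij => (hindep.indepFun hij).codRestrict (hZO i) (hZO j))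
    (fun n => (hident' n).codRestrict (hZO n) (hZO 0))
    (fun z => ⟨W.domRestrict (ζ z), (hζcont z z.2).domRestrict⟩) (fun w => hζmeas w w.2)
    (fun z => ζtilde z) (fun z w => hdom z z.2 w w.2) hint] with ω hω
  simp only [image_eq_range]
  exact hω

/-- Uniform strong law of large numbers over a compact parameter set:
for i.i.d. `Z_n` with values in a measurable `O ⊆ ℝ^m`, `W ⊆ ℝ^p` compact nonempty, and
`ζ` continuous in `w`, measurable in `z`, dominated by an integrable `ζ̃`, the empirical
means of `ζ(Z_n, ·)` converge to `E[ζ(Z₁, ·)]` uniformly on `W`, almost surely. -/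
theorem uniform_strong_law_of_large_numbers
    {Ω : Type*} [MeasurableSpace Ω] (P : Measure Ω) [IsProbabilityMeasure P]
    {m p : ℕ}
    (O : Set (EuclideanSpace ℝ (Fin m))) (hO : MeasurableSet O)
    (W : Set (EuclideanSpace ℝ (Fin p))) (hWne : W.Nonempty) (hWcpt : IsCompact W)
    (Z : ℕ → Ω → EuclideanSpace ℝ (Fin m))
    (hZmeas : ∀ n, Measurable (Z n))
    (hZO : ∀ n ω, Z n ω ∈ O)
    (hindep : iIndepFun Z P)
    (hident : ∀ n, Measure.map (Z n) P = Measure.map (Z 0) P)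
    (ζ : EuclideanSpace ℝ (Fin m) → EuclideanSpace ℝ (Fin p) → ℝ)
    (hζcont : ∀ z ∈ O, ContinuousOn (ζ z) W)
    (hζmeas : ∀ w ∈ W, Measurable fun z : O => ζ (z : EuclideanSpace ℝ (Fin m)) w)
    (ζtilde : EuclideanSpace ℝ (Fin m) → ℝ)
    (hζtmeas : Measurable fun z : O => ζtilde (z : EuclideanSpace ℝ (Fin m)))
    (hdom : ∀ z ∈ O, ∀ w ∈ W, |ζ z w| ≤ ζtilde z)
    (hint : Integrable (fun ω => ζtilde (Z 0 ω)) P) :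
    ∀ᵐ ω ∂P,
      Filter.Tendsto
        (fun N : ℕ => sSup ((fun w =>
          |(N : ℝ)⁻¹ * ∑ n ∈ Finset.range N, ζ (Z n ω) w - ∫ ω', ζ (Z 0 ω') w ∂P|) '' W))
        Filter.atTop (nhds 0) :=
  uniform_strong_law_of_large_numbers_general P O W hWcpt Z hZmeas hZO hindep hident ζ hζcont hζmeas
    ζtilde hdom hint
end
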